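/- arXiv:0901.0385 — 11 statements merged into one kernel-verified Lean document; each statement's English description precedes it below -/
import Mathlib

section
/- The function l(s) = s²·e^{-s}/(1 - e^{-s})² is strictly decreasing on (0, ∞). -/
/-!
Since `1 - e^{-s} = 2 e^{-s/2} sinh (s/2)`, we have `l(s) = ((s/2) / sinh (s/2))²`. As `sinh` is
strictly convex on `[0, ∞)` and vanishes at `0`, its secant slope `sinh x / x` from the origin is
strictly increasing there, so `x / sinh x` is positive and strictly decreasing on `(0, ∞)`.
-/

open Real Set

lemma strictConvexOn_sinh : StrictConvexOn ℝ (Ici 0) sinh :=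
  StrictMonoOn.strictConvexOn_of_deriv (convex_Ici 0) continuous_sinh.continuousOn <| by
    rw [Real.deriv_sinh, interior_Ici]
    exact cosh_strictMonoOn.mono Ioi_subset_Ici_self

lemma strictMonoOn_sinh_div_self : StrictMonoOn (fun x => sinh x / x) (Ioi 0) := by
  intro x hx y hy hxy
  simpa using strictConvexOn_sinh.secant_strict_mono self_mem_Ici (mem_Ici_of_Ioi hx)
    (mem_Ici_of_Ioi hy) (ne_of_gt hx) (ne_of_gt hy) hxy

lemma strictAntiOn_self_div_sinh : StrictAntiOn (fun x => x / sinh x) (Ioi 0) := by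
  intro x hx y hy hxy
  have hsinh_div_pos : 0 < sinh x / x := div_pos (sinh_pos_iff.mpr hx) hx
  simpa only [inv_div] using inv_strictAnti₀ hsinh_div_pos (strictMonoOn_sinh_div_self hx hy hxy)

lemma sq_two_mul_sinh_half (s : ℝ) :
    (2 * sinh (s / 2)) ^ 2 = (1 - exp (-s)) ^ 2 / exp (-s) := by
  have hexp : exp s = exp (s / 2) ^ 2 := by rw [← exp_nat_mul]; ring_nf
  rw [sinh_eq, exp_neg, exp_neg, hexp]
  field_simp

lemma sq_mul_exp_neg_div_one_sub_exp_neg_sq (s : ℝ) :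
    s ^ 2 * exp (-s) / (1 - exp (-s)) ^ 2 = (s / 2 / sinh (s / 2)) ^ 2 := by
  rw [div_div, div_pow, sq_two_mul_sinh_half, div_div_eq_mul_div]

theorem l_strictAnti :
    StrictAntiOn (fun s : ℝ => s ^ 2 * exp (-s) / (1 - exp (-s)) ^ 2) (Ioi (0 : ℝ)) := by
  intro a ha b hb hab
  simp only [sq_mul_exp_neg_div_one_sub_exp_neg_sq]
  have hb_half : (0 : ℝ) < b / 2 := half_pos (mem_Ioi.mp hb)
  refine pow_lt_pow_left₀ ?_ (div_pos hb_half (sinh_pos_iff.mpr hb_half)).le two_ne_zero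
  exact strictAntiOn_self_div_sinh (half_pos (mem_Ioi.mp ha)) hb_half (by linarith)
end

section
/- Let p, q > 1 with 1/p + 1/q = 1. For all t > 0, e^{-t}/(1 - e^{-t}) - e^{-pt}/(1 - e^{-pt}) - e^{-qt}/(1 - e^{-qt}) > 0. -/
open Real

/-- Rewrite e^{-s}/(1-e^{-s}) as 1/(e^s - 1). -/
lemma frac_rewrite {s : ℝ} (hs : 0 < s) : exp (-s) / (1 - exp (-s)) = 1 / (exp s - 1) := by
  have h0 : exp s ≠ 0 := (exp_pos s).ne'
  have h1 : 1 < exp s := one_lt_exp_iff.mpr hs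
  have h2 : exp s - 1 ≠ 0 := by linarith
  have h3 : 1 - exp (-s) ≠ 0 := by
    rw [exp_neg]
    have : (exp s)⁻¹ < 1 := by
      rw [inv_lt_one_iff₀]; right; exact h1
    linarith
  rw [exp_neg] at h3 ⊢
  field_simp

/-- Key inequality: for x > 1 and a ≥ 1,
    (x-1)^2 < x^2 * ((x^a - 1) * (x^(1/a) - 1)). -/
lemma key_ineq (x a : ℝ) (hx : 1 < x) (ha : 1 ≤ a) :
    (x - 1) ^ 2 < x ^ 2 * ((x ^ a - 1) * (x ^ (1 / a) - 1)) := by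
  have hx0 : (0 : ℝ) < x := by linarith
  have ha0 : (0 : ℝ) < a := by linarith
  set u : ℝ := x ^ (1 / a) with hu
  set v : ℝ := x ^ a with hv
  set w : ℝ := x ^ (1 - 1 / a) with hw
  have hu1 : 1 < u := by
    rw [hu]
    exact one_lt_rpow hx (by positivity)
  have hv1 : 1 < v := by
    rw [hv]
    exact one_lt_rpow hx (by linarith)
  have hw0 : 0 < w := by rw [hw]; positivity
  have hwu : w * u = x := by
    rw [hw, hu, ← rpow_add hx0]
    ring_nf
    exact rpow_one x
  -- Bernoulli: v = x^a ≥ 1 + a(x-1)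
  have h1 : 1 + a * (x - 1) ≤ v := by
    have := one_add_mul_self_le_rpow_one_add (s := x - 1) (by linarith) ha
    rw [hv]
    simpa using this
  -- Reverse Bernoulli: w = x^(1-1/a) ≤ 1 + (1-1/a)(x-1)
  have h2 : w ≤ 1 + (1 - 1 / a) * (x - 1) := by
    have := rpow_one_add_le_one_add_mul_self (s := x - 1) (by linarith)
      (p := 1 - 1 / a) (by
        have : 1 / a ≤ 1 := by
          rw [div_le_one ha0]; exact ha
        linarith) (by
        have : 0 < 1 / a := by positivity
        linarith)
    rw [hw]
    simpa using this
  -- hence x - 1 ≤ a * w * (u - 1)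
  have h3 : x - 1 ≤ a * (w * (u - 1)) := by
    have hxw : x - w = w * (u - 1) := by
      rw [mul_sub, hwu]; ring
    rw [← hxw]
    have : a * w ≤ a + (a - 1) * (x - 1) := by
      have := mul_le_mul_of_nonneg_left h2 (le_of_lt ha0)
      calc a * w ≤ a * (1 + (1 - 1 / a) * (x - 1)) := this
        _ = a + (a - 1) * (x - 1) := by field_simp
    nlinarith
  nlinarith [mul_pos (sub_pos.mpr hv1) (sub_pos.mpr hu1),
    mul_le_mul_of_nonneg_right h1 (le_of_lt (mul_pos hw0 (sub_pos.mpr hu1))),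
    mul_le_mul_of_nonneg_left h3 (by linarith : (0:ℝ) ≤ x - 1),
    mul_pos hx0 hx0, hwu]

lemma main_aux (p q : ℝ) (hp : 1 < p) (hq : 1 < q) (hpq : 1 / p + 1 / q = 1)
    (hp2 : 2 ≤ p) (t : ℝ) (ht : 0 < t) :
    exp (-t) / (1 - exp (-t)) - exp (-(p * t)) / (1 - exp (-(p * t)))
      - exp (-(q * t)) / (1 - exp (-(q * t))) > 0 := by
  have hp0 : (0 : ℝ) < p := by linarith
  have hq0 : (0 : ℝ) < q := by linarith
  have hpq1 : (p - 1) * (q - 1) = 1 := by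
    field_simp at hpq
    nlinarith
  set x : ℝ := exp t with hxdef
  have hx : 1 < x := by rw [hxdef]; exact one_lt_exp_iff.mpr ht
  have hx0 : (0 : ℝ) < x := by linarith
  have hep : exp (p * t) = x ^ p := by
    rw [hxdef, rpow_def_of_pos (exp_pos t), log_exp, mul_comm]
  have heq : exp (q * t) = x ^ q := by
    rw [hxdef, rpow_def_of_pos (exp_pos t), log_exp, mul_comm]
  rw [frac_rewrite ht, frac_rewrite (mul_pos hp0 ht), frac_rewrite (mul_pos hq0 ht), hep, heq]
  have hxp : x ^ p = x * x ^ (p - 1) := by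
    rw [← rpow_one_add' (le_of_lt hx0) (by intro h; nlinarith)]
    ring_nf
  have hxq : x ^ q = x * x ^ (q - 1) := by
    rw [← rpow_one_add' (le_of_lt hx0) (by intro h; nlinarith)]
    ring_nf
  set v : ℝ := x ^ (p - 1) with hvd
  set u : ℝ := x ^ (q - 1) with hud
  have hv1 : 1 < v := by rw [hvd]; exact one_lt_rpow hx (by linarith)
  have hu1 : 1 < u := by rw [hud]; exact one_lt_rpow hx (by linarith)
  have hq1 : q - 1 = 1 / (p - 1) := by
    rw [eq_div_iff (ne_of_gt (by linarith : (0:ℝ) < p - 1))]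
    linear_combination hpq1
  have key : (x - 1) ^ 2 < x ^ 2 * ((v - 1) * (u - 1)) := by
    have := key_ineq x (p - 1) hx (by linarith)
    rwa [← hq1, ← hvd, ← hud] at this
  rw [hxp, hxq]
  have hd0 : (0 : ℝ) < x - 1 := by linarith
  have hdp : (0 : ℝ) < x * v - 1 := by nlinarith
  have hdq : (0 : ℝ) < x * u - 1 := by nlinarith
  have expand : 1 / (x - 1) - 1 / (x * v - 1) - 1 / (x * u - 1)
      = (x ^ 2 * ((v - 1) * (u - 1)) - (x - 1) ^ 2)
        / ((x - 1) * ((x * v - 1) * (x * u - 1))) := by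
    field_simp
    ring
  rw [expand]
  exact div_pos (by linarith) (by positivity)

theorem h_at_zero_pos (p q : ℝ) (hp : 1 < p) (hq : 1 < q) (hpq : 1 / p + 1 / q = 1)
    (t : ℝ) (ht : 0 < t) :
    exp (-t) / (1 - exp (-t)) - exp (-(p * t)) / (1 - exp (-(p * t)))
      - exp (-(q * t)) / (1 - exp (-(q * t))) > 0 := by
  rcases le_total 2 p with h2 | h2
  · exact main_aux p q hp hq hpq h2 t ht
  · have hq2 : 2 ≤ q := by
      have hpq1 : (p - 1) * (q - 1) = 1 := by
        field_simp at hpq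
        nlinarith
      nlinarith
    have := main_aux q p hq hp (by linarith) hq2 t ht
    linarith
end

section
/- Let p, q > 1 with 1/p + 1/q = 1. For all t > 0, -e^{-t}/(1 - e^{-t})² + p·e^{-pt}/(1 - e^{-pt})² + q·e^{-qt}/(1 - e^{-qt})² < 0. -/
/-!
Writing `e^{-s} / (1 - e^{-s})² = 1 / (4 sinh² (s / 2))`, each of the last two terms is
`a / (4 sinh² (a t / 2))` with `a ∈ {p, q}`. Strict convexity of `sinh` on `[0, ∞)` with
`sinh 0 = 0` gives `a sinh x < sinh (a x)` for `a > 1`, so that term is strictly less than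
`(1 / a) · e^{-t} / (1 - e^{-t})²`; summing over `a = p, q` and using `1 / p + 1 / q = 1`
bounds the positive terms by the negative one.
-/

open Real Set

namespace Real

lemma strictConvexOn_sinh : StrictConvexOn ℝ (Ici 0) sinh := by
  refine StrictMonoOn.strictConvexOn_of_deriv (convex_Ici 0) continuous_sinh.continuousOn ?_
  rw [interior_Ici, deriv_sinh]
  exact cosh_strictMonoOn.mono Ioi_subset_Ici_self

lemma mul_sinh_lt_sinh_mul {a x : ℝ} (ha : 1 < a) (hx : 0 < x) : a * sinh x < sinh (a * x) := by
  have ha₀ : 0 < a := zero_lt_one.trans ha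
  have hax : 0 < a * x := mul_pos ha₀ hx
  have h := strictConvexOn_sinh.2 (mem_Ici.2 le_rfl) (mem_Ici.2 hax.le) hax.ne
    (sub_pos.2 (inv_lt_one_of_one_lt₀ ha)) (inv_pos.2 ha₀) (sub_add_cancel 1 a⁻¹)
  simp only [smul_eq_mul, mul_zero, zero_add, sinh_zero, inv_mul_cancel_left₀ ha₀.ne'] at h
  calc a * sinh x < a * (a⁻¹ * sinh (a * x)) := mul_lt_mul_of_pos_left h ha₀
    _ = sinh (a * x) := mul_inv_cancel_left₀ ha₀.ne' _

lemma exp_neg_div_one_sub_exp_neg_sq (s : ℝ) :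
    exp (-s) / (1 - exp (-s)) ^ 2 = 1 / (4 * sinh (s / 2) ^ 2) := by
  have h : (1 - exp (-s)) ^ 2 = exp (-s) * (4 * sinh (s / 2) ^ 2) := by
    rw [sinh_eq, show -s = -(s / 2) + -(s / 2) by ring, exp_add, exp_neg]
    field_simp
    ring
  rw [h, div_mul_eq_div_div, div_self (exp_pos _).ne']

lemma mul_exp_neg_mul_div_sq_lt {a t : ℝ} (ha : 1 < a) (ht : 0 < t) :
    a * exp (-(a * t)) / (1 - exp (-(a * t))) ^ 2 < 1 / a * (exp (-t) / (1 - exp (-t)) ^ 2) := by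
  have ha₀ : 0 < a := zero_lt_one.trans ha
  have hsinh : 0 < sinh (t / 2) := sinh_pos_iff.2 (half_pos ht)
  have hlt : a * sinh (t / 2) < sinh (a * t / 2) :=
    mul_div_assoc a t 2 ▸ mul_sinh_lt_sinh_mul ha (half_pos ht)
  have hsq : (a * sinh (t / 2)) ^ 2 < sinh (a * t / 2) ^ 2 :=
    pow_lt_pow_left₀ hlt (by positivity) two_ne_zero
  rw [mul_div_assoc, exp_neg_div_one_sub_exp_neg_sq, exp_neg_div_one_sub_exp_neg_sq,
    mul_one_div, div_mul_div_comm, one_mul, div_lt_div_iff₀ (by positivity) (by positivity)]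
  linarith [mul_pow a (sinh (t / 2)) 2]

end Real

theorem dht_at_zero_neg (p q : ℝ) (hp : 1 < p) (hq : 1 < q) (hpq : 1 / p + 1 / q = 1)
    (t : ℝ) (ht : 0 < t) :
    -exp (-t) / (1 - exp (-t)) ^ 2 + p * exp (-(p * t)) / (1 - exp (-(p * t))) ^ 2
      + q * exp (-(q * t)) / (1 - exp (-(q * t))) ^ 2 < 0 := by
  have hsplit : exp (-t) / (1 - exp (-t)) ^ 2
      = 1 / p * (exp (-t) / (1 - exp (-t)) ^ 2) + 1 / q * (exp (-t) / (1 - exp (-t)) ^ 2) := by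
    rw [← add_mul, hpq, one_mul]
  rw [neg_div]
  linarith [mul_exp_neg_mul_div_sq_lt hp ht, mul_exp_neg_mul_div_sq_lt hq ht]
end

section
/- Let p, q > 1 with 1/p + 1/q = 1, and define h(t,u) = 1/(1-e^{-t}) - e^{-(u+1)pt}/(1-e^{-pt}) - e^{uqt}/(1-e^{-qt}) for t > 0. Then for fixed t > 0, the function u ↦ h(t,u) is concave. -/
open Real Set

theorem ConvexOn.div_const {𝕜 E : Type*} [Field 𝕜] [LinearOrder 𝕜] [IsStrictOrderedRing 𝕜]
    [AddCommMonoid E] [Module 𝕜 E] {s : Set E} {f : E → 𝕜} (hf : ConvexOn 𝕜 s f) {c : 𝕜}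
    (hc : 0 ≤ c) : ConvexOn 𝕜 s fun x => f x / c := by
  simpa only [smul_eq_mul, div_eq_inv_mul] using hf.smul (inv_nonneg.2 hc)

theorem convexOn_exp_mul_add (a b : ℝ) : ConvexOn ℝ univ fun u : ℝ => exp (a * u + b) :=
  convexOn_exp.comp_affineMap ((LinearMap.mul ℝ ℝ a).toAffineMap + AffineMap.const ℝ ℝ b)

theorem one_sub_exp_neg_pos {x : ℝ} (hx : 0 < x) : 0 < 1 - exp (-x) :=
  sub_pos.2 (exp_lt_one_iff.2 (neg_neg_of_pos hx))

theorem h_concave_in_u_general (p q : ℝ) (hp : 1 < p) (hq : 1 < q)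
    (t : ℝ) (ht : 0 < t) :
    ConcaveOn ℝ univ (fun u : ℝ =>
      1 / (1 - exp (-t)) - exp (-((u + 1) * p * t)) / (1 - exp (-(p * t)))
        - exp (u * q * t) / (1 - exp (-(q * t)))) := by
  have hpt : 0 < p * t := mul_pos (by linarith) ht
  have hqt : 0 < q * t := mul_pos (by linarith) ht
  have hP : ConvexOn ℝ univ fun u : ℝ => exp (-((u + 1) * p * t)) / (1 - exp (-(p * t))) :=
    ((convexOn_exp_mul_add (-(p * t)) (-(p * t))).div_const (one_sub_exp_neg_pos hpt).le).congr
      fun u _ => by ring_nf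
  have hQ : ConvexOn ℝ univ fun u : ℝ => exp (u * q * t) / (1 - exp (-(q * t))) :=
    ((convexOn_exp_mul_add (q * t) 0).div_const (one_sub_exp_neg_pos hqt).le).congr
      fun u _ => by ring_nf
  exact ((concaveOn_const _ convex_univ).sub hP).sub hQ

theorem h_concave_in_u (p q : ℝ) (hp : 1 < p) (hq : 1 < q) (hpq : 1 / p + 1 / q = 1)
    (t : ℝ) (ht : 0 < t) :
    ConcaveOn ℝ univ (fun u : ℝ =>
      1 / (1 - exp (-t)) - exp (-((u + 1) * p * t)) / (1 - exp (-(p * t)))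
        - exp (u * q * t) / (1 - exp (-(q * t)))) :=
  h_concave_in_u_general p q hp hq t ht
end

section
/- Let p, q > 1 with 1/p + 1/q = 1, and define h(t,u) = 1/(1-e^{-t}) - e^{-(u+1)pt}/(1-e^{-pt}) - e^{uqt}/(1-e^{-qt}). If -1 ≤ u ≤ 0, then h(t,u) > 0 for all t > 0. -/
/-!
Write `1 / (1 - e^{-t}) = 1 + 1 / (e^t - 1)`. Convexity of `exp` between `-s` and `0` bounds
`e^{-θ s} / (1 - e^{-s})` by `1 / (e^s - 1) + (1 - θ)`; applied with `θ = u + 1`, `s = p t` and with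
`θ = -u`, `s = q t`, the constants `1 - θ` add up to `1`, so it remains to show
`1 / (e^{pt} - 1) + 1 / (e^{qt} - 1) < 1 / (e^t - 1)`. Bernoulli's inequality
`(e^t)^p > 1 + p (e^t - 1)` gives `1 / (e^{pt} - 1) < 1 / (p (e^t - 1))`, and `1/p + 1/q = 1`.
-/

open Real

lemma mul_exp_sub_one_lt_exp_mul_sub_one {t p : ℝ} (ht : t ≠ 0) (hp : 1 < p) :
    p * (exp t - 1) < exp (p * t) - 1 := by
  have h := one_add_mul_self_lt_rpow_one_add (s := exp t - 1) (by linarith [exp_pos t])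
    (sub_ne_zero.2 (mt (exp_eq_one_iff _).1 ht)) hp
  rw [add_sub_cancel, ← exp_mul, mul_comm t] at h
  linarith

lemma one_div_exp_mul_sub_one_lt {t p : ℝ} (ht : 0 < t) (hp : 1 < p) :
    1 / (exp (p * t) - 1) < 1 / (p * (exp t - 1)) :=
  one_div_lt_one_div_of_lt (mul_pos (by linarith) (by linarith [add_one_lt_exp ht.ne']))
    (mul_exp_sub_one_lt_exp_mul_sub_one ht.ne' hp)

lemma exp_neg_div_one_sub_exp_neg (s : ℝ) : exp (-s) / (1 - exp (-s)) = 1 / (exp s - 1) := by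
  rw [exp_neg, ← mul_div_mul_left _ _ (exp_ne_zero s), mul_inv_cancel₀ (exp_ne_zero s),
    mul_one_sub, mul_inv_cancel₀ (exp_ne_zero s)]

lemma one_div_one_sub_exp_neg {s : ℝ} (hs : s ≠ 0) :
    1 / (1 - exp (-s)) = 1 + 1 / (exp s - 1) := by
  have hne : 1 - exp (-s) ≠ 0 :=
    sub_ne_zero.2 (Ne.symm (mt (exp_eq_one_iff _).1 (neg_ne_zero.2 hs)))
  rw [← exp_neg_div_one_sub_exp_neg, one_add_div hne, sub_add_cancel]

lemma exp_neg_mul_div_one_sub_exp_neg_le {s θ : ℝ} (hs : 0 < s) (hθ0 : 0 ≤ θ) (hθ1 : θ ≤ 1) :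
    exp (-(θ * s)) / (1 - exp (-s)) ≤ 1 / (exp s - 1) + (1 - θ) := by
  have hpos : 0 < 1 - exp (-s) := sub_pos.2 (exp_lt_one_iff.2 (neg_lt_zero.2 hs))
  have hconv : exp (-(θ * s)) ≤ θ * exp (-s) + (1 - θ) := by
    have h := convexOn_exp.2 (Set.mem_univ (-s)) (Set.mem_univ 0) hθ0 (sub_nonneg.2 hθ1)
      (add_sub_cancel θ 1)
    simpa using h
  -- `θ x + (1 - θ) = x + (1 - θ)(1 - x)` with `x = e^{-s}`
  calc exp (-(θ * s)) / (1 - exp (-s))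
      ≤ (θ * exp (-s) + (1 - θ)) / (1 - exp (-s)) := by gcongr
    _ = exp (-s) / (1 - exp (-s)) + (1 - θ) := by field_simp; ring
    _ = 1 / (exp s - 1) + (1 - θ) := by rw [exp_neg_div_one_sub_exp_neg]

theorem h_pos_of_u_between (p q : ℝ) (hp : 1 < p) (hq : 1 < q) (hpq : 1 / p + 1 / q = 1)
    (u : ℝ) (hu1 : -1 ≤ u) (hu0 : u ≤ 0) (t : ℝ) (ht : 0 < t) :
    1 / (1 - exp (-t)) - exp (-((u + 1) * p * t)) / (1 - exp (-(p * t)))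
      - exp (u * q * t) / (1 - exp (-(q * t))) > 0 := by
  have hP := exp_neg_mul_div_one_sub_exp_neg_le (θ := u + 1) (by positivity : 0 < p * t)
    (by linarith) (by linarith)
  have hQ := exp_neg_mul_div_one_sub_exp_neg_le (θ := -u) (by positivity : 0 < q * t)
    (by linarith) (by linarith)
  rw [← mul_assoc] at hP
  rw [← mul_assoc, neg_mul, neg_mul, neg_neg] at hQ
  have hsum : 1 / (p * (exp t - 1)) + 1 / (q * (exp t - 1)) = 1 / (exp t - 1) := by
    rw [← one_div_mul_one_div_rev, ← one_div_mul_one_div_rev, ← mul_add, hpq, mul_one]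
  have hbp := one_div_exp_mul_sub_one_lt ht hp
  have hbq := one_div_exp_mul_sub_one_lt ht hq
  rw [one_div_one_sub_exp_neg ht.ne']
  linarith
end

section
/- Let p, q > 1 with 1/p + 1/q = 1, and define h(t,u) = 1/(1-e^{-t}) - e^{-(u+1)pt}/(1-e^{-pt}) - e^{uqt}/(1-e^{-qt}). For fixed u ≥ 0, the mixed partial ∂²h/∂t∂u is negative for all t > 0; equivalently, ∂h/∂t (t,u) is strictly decreasing in u on [0,∞) for each fixed t > 0. -/
open Real Set

/-- h(t,u) = 1/(1-e^{-t}) - e^{-(u+1)pt}/(1-e^{-pt}) - e^{uqt}/(1-e^{-qt}) -/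
noncomputable def h (p q t u : ℝ) : ℝ :=
  1 / (1 - exp (-t)) - exp (-((u + 1) * p * t)) / (1 - exp (-(p * t)))
    - exp (u * q * t) / (1 - exp (-(q * t)))

/-!
All three terms of `h` are of the form `k a x = e^{a x} / (1 - e^{-x})`, taken at `(0, t)`,
`(-(u + 1), p t)` and `(u, q t)`. The mixed partial `∂ₐ∂ₓ k a x` has the sign of
`1 - (1 + x) e^{-x} + a x (1 - e^{-x})`, which is positive for `a ≥ 0` and negative for `a ≤ -1`
when `x > 0` (both by `e^y > 1 + y`). Hence `∂ₓ k (-(u + 1)) (p t)` and `∂ₓ k u (q t)` both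
increase strictly with `u`, and `∂ₜ h = ∂ₓ k 0 t - p ∂ₓ k (-(u + 1)) (p t) - q ∂ₓ k u (q t)`
decreases strictly.
-/

namespace ExpRatio

noncomputable def k (a x : ℝ) : ℝ := exp (a * x) / (1 - exp (-x))

noncomputable def dxk (a x : ℝ) : ℝ :=
  exp (a * x) * (a * (1 - exp (-x)) - exp (-x)) / (1 - exp (-x)) ^ 2

noncomputable def dadxk (a x : ℝ) : ℝ :=
  exp (a * x) * (1 - (1 + x) * exp (-x) + a * x * (1 - exp (-x))) / (1 - exp (-x)) ^ 2

lemma one_sub_exp_neg_ne_zero {x : ℝ} (hx : x ≠ 0) : 1 - exp (-x) ≠ 0 := by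
  rw [sub_ne_zero, ne_comm, Ne, exp_eq_one_iff, neg_eq_zero]
  exact hx

lemma one_sub_exp_neg_pos {x : ℝ} (hx : 0 < x) : 0 < 1 - exp (-x) := by
  linarith [exp_lt_one_iff.mpr (neg_lt_zero.mpr hx)]

lemma one_add_mul_exp_neg_lt_one {x : ℝ} (hx : 0 < x) : (1 + x) * exp (-x) < 1 := by
  calc (1 + x) * exp (-x) < exp x * exp (-x) := by
        gcongr; linarith [add_one_lt_exp hx.ne']
    _ = 1 := by rw [← exp_add, add_neg_cancel, exp_zero]

lemma hasDerivAt_k (a : ℝ) {x : ℝ} (hx : x ≠ 0) : HasDerivAt (k a) (dxk a x) x := by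
  have hnum : HasDerivAt (fun y => exp (a * y)) (exp (a * x) * a) x :=
    ((hasDerivAt_id x).const_mul a).exp.congr_deriv (by simp)
  have hden : HasDerivAt (fun y => 1 - exp (-y)) (exp (-x)) x :=
    ((hasDerivAt_id x).neg.exp.const_sub 1).congr_deriv (by simp)
  refine (hnum.div hden (one_sub_exp_neg_ne_zero hx)).congr_deriv ?_
  unfold dxk
  ring

lemma hasDerivAt_dk_left (a x : ℝ) : HasDerivAt (fun b => dxk b x) (dadxk a x) a := by
  have hexp : HasDerivAt (fun b => exp (b * x)) (exp (a * x) * x) a :=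
    ((hasDerivAt_id a).mul_const x).exp.congr_deriv (by simp)
  have hlin : HasDerivAt (fun b => b * (1 - exp (-x)) - exp (-x)) (1 - exp (-x)) a :=
    ((hasDerivAt_id a).mul_const _).sub_const _ |>.congr_deriv (by simp)
  refine ((hexp.mul hlin).div_const _).congr_deriv ?_
  unfold dadxk
  ring

lemma dadxk_pos {a x : ℝ} (hx : 0 < x) (ha : 0 ≤ a) : 0 < dadxk a x := by
  have hd := one_sub_exp_neg_pos hx
  have hnum : 0 < 1 - (1 + x) * exp (-x) + a * x * (1 - exp (-x)) := by
    have := one_add_mul_exp_neg_lt_one hx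
    positivity
  unfold dadxk
  positivity

lemma dadxk_neg {a x : ℝ} (hx : 0 < x) (ha : a ≤ -1) : dadxk a x < 0 := by
  have hd := one_sub_exp_neg_pos hx
  have hnum : 1 - (1 + x) * exp (-x) + a * x * (1 - exp (-x)) < 0 := by
    have hexp : 1 - x < exp (-x) := by linarith [add_one_lt_exp (neg_ne_zero.mpr hx.ne')]
    nlinarith [mul_le_mul_of_nonneg_right ha (mul_pos hx hd).le]
  unfold dadxk
  exact div_neg_of_neg_of_pos (mul_neg_of_pos_of_neg (exp_pos _) hnum) (by positivity)

lemma strictMonoOn_dk {x : ℝ} (hx : 0 < x) : StrictMonoOn (fun a => dxk a x) (Ici 0) := by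
  refine strictMonoOn_of_deriv_pos (convex_Ici 0)
    (fun a _ => (hasDerivAt_dk_left a x).continuousAt.continuousWithinAt) fun a ha => ?_
  rw [interior_Ici] at ha
  rw [(hasDerivAt_dk_left a x).deriv]
  exact dadxk_pos hx (le_of_lt ha)

lemma strictAntiOn_dk {x : ℝ} (hx : 0 < x) : StrictAntiOn (fun a => dxk a x) (Iic (-1)) := by
  refine strictAntiOn_of_deriv_neg (convex_Iic (-1))
    (fun a _ => (hasDerivAt_dk_left a x).continuousAt.continuousWithinAt) fun a ha => ?_
  rw [interior_Iic] at ha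
  rw [(hasDerivAt_dk_left a x).deriv]
  exact dadxk_neg hx (le_of_lt ha)

end ExpRatio

open ExpRatio

lemma h_eq_k (p q s u : ℝ) : h p q s u = k 0 s - k (-(u + 1)) (p * s) - k u (q * s) := by
  simp only [h, k, zero_mul, exp_zero]
  ring_nf

lemma deriv_h_left (p q u : ℝ) {t : ℝ} (hp : p ≠ 0) (hq : q ≠ 0) (ht : t ≠ 0) :
    deriv (fun s => h p q s u) t = dxk 0 t - p * dxk (-(u + 1)) (p * t) - q * dxk u (q * t) := by
  have hpt := (hasDerivAt_k (-(u + 1)) (mul_ne_zero hp ht)).comp t ((hasDerivAt_id t).const_mul p)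
  have hqt := (hasDerivAt_k u (mul_ne_zero hq ht)).comp t ((hasDerivAt_id t).const_mul q)
  simp only [h_eq_k]
  refine (((hasDerivAt_k 0 ht).sub hpt).sub hqt).deriv.trans ?_
  simp only [mul_one]
  ring

theorem dht_strictAnti_in_u_general (p q : ℝ) (hp : 1 < p) (hq : 1 < q)
    (t : ℝ) (ht : 0 < t) :
    StrictAntiOn (fun u : ℝ => deriv (fun s : ℝ => h p q s u) t) (Ici (0 : ℝ)) := by
  have hp₀ : 0 < p := by linarith
  have hq₀ : 0 < q := by linarith
  intro u hu v hv huv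
  simp only [deriv_h_left p q _ hp₀.ne' hq₀.ne' ht.ne']
  have hP : dxk (-(u + 1)) (p * t) < dxk (-(v + 1)) (p * t) :=
    strictAntiOn_dk (mul_pos hp₀ ht) (show -(v + 1) ≤ -1 by linarith [mem_Ici.mp hv])
      (show -(u + 1) ≤ -1 by linarith [mem_Ici.mp hu]) (by linarith)
  have hQ : dxk u (q * t) < dxk v (q * t) := strictMonoOn_dk (mul_pos hq₀ ht) hu hv huv
  linarith [mul_lt_mul_of_pos_left hP hp₀, mul_lt_mul_of_pos_left hQ hq₀]

theorem dht_strictAnti_in_u (p q : ℝ) (hp : 1 < p) (hq : 1 < q) (hpq : 1 / p + 1 / q = 1)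
    (t : ℝ) (ht : 0 < t) :
    StrictAntiOn (fun u : ℝ => deriv (fun s : ℝ => h p q s u) t) (Ici (0 : ℝ)) :=
  dht_strictAnti_in_u_general p q hp hq t ht
end

section
/- Let p, q > 1 with 1/p + 1/q = 1, and define h(t,u) = 1/(1-e^{-t}) - e^{-(u+1)pt}/(1-e^{-pt}) - e^{uqt}/(1-e^{-qt}). Then for every fixed u ∈ ℝ, the limit of h(t,u) as t → 0⁺ equals 1/2. -/
open Real Set Filter

/-!
Since `1 / (1 - exp (-x)) = 1 / x + 1 / 2 + o(1)` as `x → 0⁺`, we get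
`exp (c * t) / (1 - exp (-(a * t))) = 1 / (a * t) + 1 / 2 + c / a + o(1)`.
The three terms of `h` have `(a, c) = (1, 0), (p, -(u + 1) * p), (q, u * q)`; their poles cancel
because `1 / p + 1 / q = 1`, and the constants add up to `1 / 2 - (1 / 2 - (u + 1)) - (1 / 2 + u)`.
-/

open Topology

lemma tendsto_const_mul_nhdsGT_zero {a : ℝ} (ha : 0 < a) :
    Tendsto (a * ·) (𝓝[>] 0) (𝓝[>] 0) :=
  tendsto_iff_comap.2 (comap_mulLeft_nhdsGT_zero ha).ge

lemma tendsto_exp_mul_sub_one_div (c : ℝ) :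
    Tendsto (fun t => (exp (c * t) - 1) / t) (𝓝[>] 0) (𝓝 c) := by
  have hd : HasDerivAt (fun t => exp (c * t)) c 0 := by
    simpa using ((hasDerivAt_id (0 : ℝ)).const_mul c).exp
  refine hd.tendsto_slope_zero_right.congr fun t => ?_
  simp [div_eq_inv_mul]

lemma tendsto_one_sub_exp_neg_div :
    Tendsto (fun x => (1 - exp (-x)) / x) (𝓝[>] 0) (𝓝 1) := by
  convert (tendsto_exp_mul_sub_one_div (-1)).neg using 2 with x
  · rw [neg_one_mul, ← neg_div, neg_sub]
  · norm_num

lemma tendsto_sub_one_add_exp_neg_div_sq :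
    Tendsto (fun x => (x - 1 + exp (-x)) / x ^ 2) (𝓝[>] 0) (𝓝 (1 / 2)) := by
  refine HasDerivAt.lhopital_zero_nhdsGT (f' := fun x => 1 - exp (-x)) (g' := fun x => 2 * x)
    (Eventually.of_forall fun x => ?_) (Eventually.of_forall fun x => ?_) ?_ ?_ ?_ ?_
  · exact (((hasDerivAt_id' x).sub_const 1).add (hasDerivAt_id' x).neg.exp).congr_deriv
      (by simp [sub_eq_add_neg])
  · simpa using hasDerivAt_pow 2 x
  · filter_upwards [self_mem_nhdsWithin] with x (hx : 0 < x)
    positivity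
  · have : Continuous fun x : ℝ => x - 1 + exp (-x) := by fun_prop
    simpa using (this.tendsto 0).mono_left nhdsWithin_le_nhds
  · have : Continuous fun x : ℝ => x ^ 2 := by fun_prop
    simpa using (this.tendsto 0).mono_left nhdsWithin_le_nhds
  · refine (tendsto_one_sub_exp_neg_div.div_const 2).congr fun x => ?_
    simp [div_div, mul_comm]

lemma tendsto_one_div_one_sub_exp_neg_sub_one_div :
    Tendsto (fun x => 1 / (1 - exp (-x)) - 1 / x) (𝓝[>] 0) (𝓝 (1 / 2)) := by
  have hinv : Tendsto (fun x => x / (1 - exp (-x))) (𝓝[>] 0) (𝓝 1) := by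
    simpa using tendsto_one_sub_exp_neg_div.inv₀ one_ne_zero
  have hprod := tendsto_sub_one_add_exp_neg_div_sq.mul hinv
  rw [mul_one] at hprod
  refine hprod.congr' ?_
  filter_upwards [self_mem_nhdsWithin] with x (hx : 0 < x)
  have : 1 - exp (-x) ≠ 0 := (sub_pos.2 (exp_lt_one_iff.2 (neg_lt_zero.2 hx))).ne'
  field_simp
  ring

lemma tendsto_exp_mul_div_one_sub_exp_neg_mul_sub_one_div {a : ℝ} (ha : 0 < a) (c : ℝ) :
    Tendsto (fun t => exp (c * t) / (1 - exp (-(a * t))) - 1 / (a * t)) (𝓝[>] 0)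
      (𝓝 (1 / 2 + c / a)) := by
  have hexp : Tendsto (fun t => exp (c * t)) (𝓝[>] 0) (𝓝 1) := by
    have : Continuous fun t => exp (c * t) := by fun_prop
    simpa using (this.tendsto 0).mono_left nhdsWithin_le_nhds
  have hsing := tendsto_one_div_one_sub_exp_neg_sub_one_div.comp (tendsto_const_mul_nhdsGT_zero ha)
  have := (hexp.mul hsing).add ((tendsto_exp_mul_sub_one_div c).div_const a)
  rw [one_mul] at this
  refine this.congr fun t => ?_
  simp only [Function.comp_apply]
  ring

theorem h_tendsto_half (p q : ℝ) (hp : 1 < p) (hq : 1 < q) (hpq : 1 / p + 1 / q = 1)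
    (u : ℝ) :
    Tendsto (fun t : ℝ => h p q t u) (nhdsWithin 0 (Ioi 0)) (nhds (1 / 2)) := by
  have hp0 : 0 < p := by linarith
  have hq0 : 0 < q := by linarith
  have hlim := (tendsto_one_div_one_sub_exp_neg_sub_one_div.sub
    (tendsto_exp_mul_div_one_sub_exp_neg_mul_sub_one_div hp0 (-((u + 1) * p)))).sub
    (tendsto_exp_mul_div_one_sub_exp_neg_mul_sub_one_div hq0 (u * q))
  have hval : (1 / 2 : ℝ) - (1 / 2 + -((u + 1) * p) / p) - (1 / 2 + u * q / q) = 1 / 2 := by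
    field_simp
    ring
  rw [hval] at hlim
  refine hlim.congr fun t => ?_
  have hsplit : 1 / t = 1 / (p * t) + 1 / (q * t) := by
    calc 1 / t = (1 / p + 1 / q) * (1 / t) := by rw [hpq, one_mul]
      _ = 1 / (p * t) + 1 / (q * t) := by ring
  rw [h, neg_mul, hsplit]
  ring
end

section
/- Let n ≥ k ≥ 0 and a > b > 0 be integers. If -1 ≤ k - (n+1)·b/a ≤ 0, then the sequence C_j = C(n + j·a, k + j·b) (binomial coefficient) for j = 0, 1, 2, … is log-convex, i.e., C_{j+1}² ≤ C_j · C_{j+2} for all j ≥ 0. -/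
open Finset Nat

private lemma fact_prod (t : ℕ) : ∀ s : ℕ,
    t ! * ∏ x ∈ Finset.range s, (t + 1 + x) = (t + s)!
  | 0 => by simp
  | s + 1 => by
    rw [Finset.prod_range_succ, ← mul_assoc, fact_prod t s,
      show t + (s + 1) = (t + s) + 1 from rfl, Nat.factorial_succ]
    ring

private lemma fac_step (k m b c e i t : ℕ) (heq : b * (k + m + 1) = (b + c) * k + e)
    (h : b * i + e ≤ (b + c) * t + (b + c)) :
    (k + m + 1 + i) * (k + b + 1 + t) ≤ (k + m + (b + c) + 1 + i) * (k + 1 + t) := by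
  have key : b * (k + m + 1 + i) ≤ (b + c) * (k + 1 + t) := by
    calc b * (k + m + 1 + i) = b * (k + m + 1) + b * i := by ring
      _ = (b + c) * k + e + b * i := by rw [heq]
      _ = (b + c) * k + (b * i + e) := by ring
      _ ≤ (b + c) * k + ((b + c) * t + (b + c)) := Nat.add_le_add_left h _
      _ = (b + c) * (k + 1 + t) := by ring
  calc (k + m + 1 + i) * (k + b + 1 + t)
      = (k + m + 1 + i) * (k + 1 + t) + b * (k + m + 1 + i) := by ring
    _ ≤ (k + m + 1 + i) * (k + 1 + t) + (b + c) * (k + 1 + t) := Nat.add_le_add le_rfl key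
    _ = (k + m + (b + c) + 1 + i) * (k + 1 + t) := by ring

private lemma fac_flat (k m b c e q t : ℕ) (heq : b * (k + m + 1) = (b + c) * k + e)
    (h : (b + c) * t ≤ b * (t + q) + e) :
    (k + m + 1 + (t + q)) * (m + c + 1 + q) ≤ (k + m + (b + c) + 1 + (t + q)) * (m + 1 + q) := by
  have hbm : b * m + b = c * k + e := by
    have h2 : b * k + (b * m + b) = b * k + (c * k + e) := by
      calc b * k + (b * m + b) = b * (k + m + 1) := by ring
        _ = (b + c) * k + e := heq
        _ = b * k + (c * k + e) := by ring
    exact Nat.add_left_cancel h2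
  have h' : c * t ≤ b * q + e := by
    have h2 : b * t + c * t ≤ b * t + (b * q + e) := by
      calc b * t + c * t = (b + c) * t := by ring
        _ ≤ b * (t + q) + e := h
        _ = b * t + (b * q + e) := by ring
    exact Nat.le_of_add_le_add_left h2
  have key : c * (k + m + 1 + (t + q)) ≤ (b + c) * (m + 1 + q) := by
    calc c * (k + m + 1 + (t + q)) = c * t + (c * k + (c * m + c + c * q)) := by ring
      _ ≤ (b * q + e) + (c * k + (c * m + c + c * q)) := Nat.add_le_add_right h' _
      _ = (c * k + e) + (b * q + (c * m + c + c * q)) := by ring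
      _ = (b * m + b) + (b * q + (c * m + c + c * q)) := by rw [← hbm]
      _ = (b + c) * (m + 1 + q) := by ring
  calc (k + m + 1 + (t + q)) * (m + c + 1 + q)
      = (k + m + 1 + (t + q)) * (m + 1 + q) + c * (k + m + 1 + (t + q)) := by ring
    _ ≤ (k + m + 1 + (t + q)) * (m + 1 + q) + (b + c) * (m + 1 + q) := Nat.add_le_add le_rfl key
    _ = (k + m + (b + c) + 1 + (t + q)) * (m + 1 + q) := by ring

private lemma prod_ineq (k m b c e : ℕ) (hb : 0 < b) (hc : 0 < c) (hea : e ≤ b + c)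
    (heq : b * (k + m + 1) = (b + c) * k + e) :
    (∏ x ∈ Finset.range (b + c), (k + m + 1 + x)) *
        ((∏ x ∈ Finset.range b, (k + b + 1 + x)) * (∏ x ∈ Finset.range c, (m + c + 1 + x))) ≤
      (∏ x ∈ Finset.range (b + c), (k + m + (b + c) + 1 + x)) *
        ((∏ x ∈ Finset.range b, (k + 1 + x)) * (∏ x ∈ Finset.range c, (m + 1 + x))) := by
  have main : ∀ i, i ≤ b + c → ∃ t, t ≤ b ∧ t ≤ i ∧ i ≤ t + c ∧
      (b + c) * t ≤ b * i + e ∧ b * i + e ≤ (b + c) * t + (b + c) ∧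
      (∏ x ∈ Finset.range i, (k + m + 1 + x)) *
          ((∏ x ∈ Finset.range t, (k + b + 1 + x)) *
            (∏ x ∈ Finset.range (i - t), (m + c + 1 + x))) ≤
        (∏ x ∈ Finset.range i, (k + m + (b + c) + 1 + x)) *
          ((∏ x ∈ Finset.range t, (k + 1 + x)) *
            (∏ x ∈ Finset.range (i - t), (m + 1 + x))) := by
    intro i
    induction i with
    | zero =>
      intro _
      exact ⟨0, Nat.zero_le _, le_rfl, by omega, by simp, by simpa using hea, by simp⟩
    | succ i ih =>
      intro hi
      obtain ⟨t, htb, hti, hitc, h5, h6, hprod⟩ := ih (by omega)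
      by_cases hstep : (b + c) * (t + 1) ≤ b * (i + 1) + e ∧ t < b
      · -- increment t
        have h6new : b * (i + 1) + e ≤ (b + c) * (t + 1) + (b + c) := by
          calc b * (i + 1) + e = b * i + e + b := by ring
            _ ≤ (b + c) * t + (b + c) + b := Nat.add_le_add_right h6 b
            _ ≤ (b + c) * t + (b + c) + (b + c) := Nat.add_le_add_left (Nat.le_add_right b c) _
            _ = (b + c) * (t + 1) + (b + c) := by ring
        refine ⟨t + 1, hstep.2, by omega, by omega, hstep.1, h6new, ?_⟩
        have hfac := fac_step k m b c e i t heq h6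
        have hit : i + 1 - (t + 1) = i - t := by omega
        calc (∏ x ∈ Finset.range (i + 1), (k + m + 1 + x)) *
              ((∏ x ∈ Finset.range (t + 1), (k + b + 1 + x)) *
                (∏ x ∈ Finset.range (i + 1 - (t + 1)), (m + c + 1 + x)))
            = ((∏ x ∈ Finset.range i, (k + m + 1 + x)) *
                ((∏ x ∈ Finset.range t, (k + b + 1 + x)) *
                  (∏ x ∈ Finset.range (i - t), (m + c + 1 + x)))) *
                ((k + m + 1 + i) * (k + b + 1 + t)) := by
              rw [hit, Finset.prod_range_succ, Finset.prod_range_succ]; ring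
          _ ≤ ((∏ x ∈ Finset.range i, (k + m + (b + c) + 1 + x)) *
                ((∏ x ∈ Finset.range t, (k + 1 + x)) *
                  (∏ x ∈ Finset.range (i - t), (m + 1 + x)))) *
                ((k + m + (b + c) + 1 + i) * (k + 1 + t)) := Nat.mul_le_mul hprod hfac
          _ = _ := by
              rw [hit, Finset.prod_range_succ, Finset.prod_range_succ]; ring
      · -- stay at t
        have h6' : b * (i + 1) + e ≤ (b + c) * t + (b + c) := by
          rcases Nat.lt_or_ge t b with h | h
          · have hns : ¬ ((b + c) * (t + 1) ≤ b * (i + 1) + e) := fun hcon => hstep ⟨hcon, h⟩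
            push_neg at hns
            calc b * (i + 1) + e ≤ (b + c) * (t + 1) := Nat.le_of_lt hns
              _ = (b + c) * t + (b + c) := by ring
          · have htb' : t = b := le_antisymm htb h
            rw [htb']
            calc b * (i + 1) + e ≤ b * (b + c) + (b + c) :=
                Nat.add_le_add (Nat.mul_le_mul le_rfl hi) hea
              _ = (b + c) * b + (b + c) := by ring
        have h2' : i + 1 ≤ t + c := by
          rcases Nat.lt_or_ge t b with h | h
          · have hns : ¬ ((b + c) * (t + 1) ≤ b * (i + 1) + e) := fun hcon => hstep ⟨hcon, h⟩
            push_neg at hns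
            by_contra hcon
            push_neg at hcon
            have e1 : b * (t + c + 1) ≤ b * (i + 1) := Nat.mul_le_mul le_rfl (by omega)
            have e3 : c * (t + 1) ≤ c * b := Nat.mul_le_mul le_rfl (by omega)
            have hlt : b * (i + 1) + e < b * (t + 1) + c * (t + 1) := by
              calc b * (i + 1) + e < (b + c) * (t + 1) := hns
                _ = b * (t + 1) + c * (t + 1) := by ring
            have e1' : b * (t + 1) + b * c ≤ b * (i + 1) := by
              calc b * (t + 1) + b * c = b * (t + c + 1) := by ring
                _ ≤ b * (i + 1) := e1
            have e3' : c * (t + 1) ≤ b * c := by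
              calc c * (t + 1) ≤ c * b := e3
                _ = b * c := by ring
            omega
          · have htb' : t = b := le_antisymm htb h
            omega
        have h5' : (b + c) * t ≤ b * (i + 1) + e := by
          calc (b + c) * t ≤ b * i + e := h5
            _ ≤ b * (i + 1) + e := Nat.add_le_add_right (Nat.mul_le_mul le_rfl (by omega)) e
        refine ⟨t, htb, by omega, h2', h5', h6', ?_⟩
        have hfac : (k + m + 1 + i) * (m + c + 1 + (i - t)) ≤
            (k + m + (b + c) + 1 + i) * (m + 1 + (i - t)) := by
          obtain ⟨q, rfl⟩ : ∃ q, i = t + q := ⟨i - t, by omega⟩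
          have hq' : t + q - t = q := by omega
          rw [hq']
          exact fac_flat k m b c e q t heq h5
        have hit : i + 1 - t = (i - t) + 1 := by omega
        calc (∏ x ∈ Finset.range (i + 1), (k + m + 1 + x)) *
              ((∏ x ∈ Finset.range t, (k + b + 1 + x)) *
                (∏ x ∈ Finset.range (i + 1 - t), (m + c + 1 + x)))
            = ((∏ x ∈ Finset.range i, (k + m + 1 + x)) *
                ((∏ x ∈ Finset.range t, (k + b + 1 + x)) *
                  (∏ x ∈ Finset.range (i - t), (m + c + 1 + x)))) *
                ((k + m + 1 + i) * (m + c + 1 + (i - t))) := by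
              rw [hit, Finset.prod_range_succ, Finset.prod_range_succ]; ring
          _ ≤ ((∏ x ∈ Finset.range i, (k + m + (b + c) + 1 + x)) *
                ((∏ x ∈ Finset.range t, (k + 1 + x)) *
                  (∏ x ∈ Finset.range (i - t), (m + 1 + x)))) *
                ((k + m + (b + c) + 1 + i) * (m + 1 + (i - t))) := Nat.mul_le_mul hprod hfac
          _ = _ := by
              rw [hit, Finset.prod_range_succ, Finset.prod_range_succ]; ring
  obtain ⟨t, htb, _, hitc, _, _, hprod⟩ := main (b + c) le_rfl
  have ht : t = b := by omega
  rw [ht] at hprod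
  have hbc : b + c - b = c := by omega
  rwa [hbc] at hprod

private lemma choose_sq_le (N K a b e : ℕ) (hKN : K ≤ N) (hba : b < a) (hb : 0 < b)
    (heq : b * (N + 1) = a * K + e) (hea : e ≤ a) :
    ((N + a).choose (K + b)) ^ 2 ≤ N.choose K * ((N + 2 * a).choose (K + 2 * b)) := by
  obtain ⟨c, rfl⟩ : ∃ c, a = b + c := ⟨a - b, by omega⟩
  have hc : 0 < c := by omega
  obtain ⟨m, rfl⟩ : ∃ m, N = K + m := ⟨N - K, by omega⟩
  have P := prod_ineq K m b c e hb hc hea heq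
  have hA : (K + m)! * ∏ x ∈ Finset.range (b + c), (K + m + 1 + x) = (K + m + (b + c))! :=
    fact_prod (K + m) (b + c)
  have hA' : (K + m + (b + c))! * ∏ x ∈ Finset.range (b + c), (K + m + (b + c) + 1 + x) =
      (K + m + 2 * (b + c))! := by
    rw [fact_prod (K + m + (b + c)) (b + c), show K + m + (b + c) + (b + c) = K + m + 2 * (b + c)
      from by ring]
  have hB : K ! * ∏ x ∈ Finset.range b, (K + 1 + x) = (K + b)! := fact_prod K b
  have hB' : (K + b)! * ∏ x ∈ Finset.range b, (K + b + 1 + x) = (K + 2 * b)! := by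
    rw [fact_prod (K + b) b, show K + b + b = K + 2 * b from by ring]
  have hC : m ! * ∏ x ∈ Finset.range c, (m + 1 + x) = (m + c)! := fact_prod m c
  have hC' : (m + c)! * ∏ x ∈ Finset.range c, (m + c + 1 + x) = (m + 2 * c)! := by
    rw [fact_prod (m + c) c, show m + c + c = m + 2 * c from by ring]
  have hX0 : (K + m).choose K * K ! * m ! = (K + m)! := by
    have h := Nat.choose_mul_factorial_mul_factorial (show K ≤ K + m by omega)
    rwa [show K + m - K = m by omega] at h
  have hX1 : (K + m + (b + c)).choose (K + b) * (K + b)! * (m + c)! = (K + m + (b + c))! := by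
    have h := Nat.choose_mul_factorial_mul_factorial (show K + b ≤ K + m + (b + c) by omega)
    rwa [show K + m + (b + c) - (K + b) = m + c by omega] at h
  have hX2 : (K + m + 2 * (b + c)).choose (K + 2 * b) * (K + 2 * b)! * (m + 2 * c)! =
      (K + m + 2 * (b + c))! := by
    have h := Nat.choose_mul_factorial_mul_factorial
      (show K + 2 * b ≤ K + m + 2 * (b + c) by omega)
    rwa [show K + m + 2 * (b + c) - (K + 2 * b) = m + 2 * c by omega] at h
  set A := ∏ x ∈ Finset.range (b + c), (K + m + 1 + x) with hAdef
  set A' := ∏ x ∈ Finset.range (b + c), (K + m + (b + c) + 1 + x) with hA'def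
  set B := ∏ x ∈ Finset.range b, (K + 1 + x) with hBdef
  set B' := ∏ x ∈ Finset.range b, (K + b + 1 + x) with hB'def
  set C := ∏ x ∈ Finset.range c, (m + 1 + x) with hCdef
  set C' := ∏ x ∈ Finset.range c, (m + c + 1 + x) with hC'def
  set N0 := (K + m)! with hN0def
  set N1 := (K + m + (b + c))! with hN1def
  set N2 := (K + m + 2 * (b + c))! with hN2def
  set K1 := (K + b)! with hK1def
  set K2 := (K + 2 * b)! with hK2def
  set M1 := (m + c)! with hM1def
  set M2 := (m + 2 * c)! with hM2def
  have e1 : (N0 * N1 * (K ! * K1) * (m ! * M1)) * (A * (B' * C')) =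
      N1 * N1 * (K ! * m ! * (K2 * M2)) := by
    calc (N0 * N1 * (K ! * K1) * (m ! * M1)) * (A * (B' * C'))
        = (N0 * A) * ((K1 * B') * ((M1 * C') * (N1 * (K ! * m !)))) := by ring
      _ = N1 * (K2 * (M2 * (N1 * (K ! * m !)))) := by rw [hA, hB', hC']
      _ = N1 * N1 * (K ! * m ! * (K2 * M2)) := by ring
  have e2 : (N0 * N1 * (K ! * K1) * (m ! * M1)) * (A' * (B * C)) =
      N0 * N2 * (K1 * M1 * (K1 * M1)) := by
    calc (N0 * N1 * (K ! * K1) * (m ! * M1)) * (A' * (B * C))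
        = (N1 * A') * ((K ! * B) * ((m ! * C) * (N0 * (K1 * M1)))) := by ring
      _ = N2 * (K1 * (M1 * (N0 * (K1 * M1)))) := by rw [hA', hB, hC]
      _ = N0 * N2 * (K1 * M1 * (K1 * M1)) := by ring
  have hN : N1 * N1 * (K ! * m ! * (K2 * M2)) ≤ N0 * N2 * (K1 * M1 * (K1 * M1)) := by
    rw [← e1, ← e2]
    exact Nat.mul_le_mul le_rfl P
  have hG : 0 < K1 * M1 * (K1 * M1) * (K ! * m ! * (K2 * M2)) := by positivity
  refine Nat.le_of_mul_le_mul_right ?_ hG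
  calc ((K + m + (b + c)).choose (K + b)) ^ 2 * (K1 * M1 * (K1 * M1) * (K ! * m ! * (K2 * M2)))
      = ((K + m + (b + c)).choose (K + b) * K1 * M1) *
          ((K + m + (b + c)).choose (K + b) * K1 * M1) * (K ! * m ! * (K2 * M2)) := by ring
    _ = N1 * N1 * (K ! * m ! * (K2 * M2)) := by rw [hX1]
    _ ≤ N0 * N2 * (K1 * M1 * (K1 * M1)) := hN
    _ = ((K + m).choose K * K ! * m !) *
          ((K + m + 2 * (b + c)).choose (K + 2 * b) * K2 * M2) * (K1 * M1 * (K1 * M1)) := by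
        rw [hX0, hX2]
    _ = (K + m).choose K * ((K + m + 2 * (b + c)).choose (K + 2 * b)) *
          (K1 * M1 * (K1 * M1) * (K ! * m ! * (K2 * M2))) := by ring

theorem logConvex_of_ratio_condition (n k a b : ℕ) (hkn : k ≤ n) (hba : b < a) (hb : 0 < b)
    (h1 : (-1 : ℚ) ≤ (k : ℚ) - (n + 1) * b / a) (h2 : (k : ℚ) - (n + 1) * b / a ≤ 0) :
    ∀ j : ℕ,
      ((n + (j + 1) * a).choose (k + (j + 1) * b)) ^ 2 ≤
        (n + j * a).choose (k + j * b) * (n + (j + 2) * a).choose (k + (j + 2) * b) := by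
  have ha : 0 < a := lt_trans hb hba
  have haQ : (0 : ℚ) < a := by exact_mod_cast ha
  have hn2 : a * k ≤ b * (n + 1) := by
    have h2' : (k : ℚ) * a ≤ (n + 1) * b := by
      rw [← le_div_iff₀ haQ]
      linarith
    apply (Nat.cast_le (α := ℚ)).mp
    push_cast
    linarith
  have hn1 : b * (n + 1) ≤ a * k + a := by
    have h1' : (n + 1 : ℚ) * b ≤ (k + 1) * a := by
      have h := div_le_iff₀ haQ |>.mp (show ((n : ℚ) + 1) * b / a ≤ k + 1 by linarith)
      linarith
    apply (Nat.cast_le (α := ℚ)).mp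
    push_cast
    linarith
  set e := b * (n + 1) - a * k with hedef
  have heq : b * (n + 1) = a * k + e := by omega
  have hea : e ≤ a := by omega
  intro j
  have r1 : n + (j + 1) * a = (n + j * a) + a := by ring
  have r2 : k + (j + 1) * b = (k + j * b) + b := by ring
  have r3 : n + (j + 2) * a = (n + j * a) + 2 * a := by ring
  have r4 : k + (j + 2) * b = (k + j * b) + 2 * b := by ring
  rw [r1, r2, r3, r4]
  have heq' : b * ((n + j * a) + 1) = a * (k + j * b) + e := by
    have hr : b * ((n + j * a) + 1) = b * (n + 1) + a * (j * b) := by ring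
    rw [hr, heq]; ring
  exact choose_sq_le (n + j * a) (k + j * b) a b e
    (Nat.add_le_add hkn (Nat.mul_le_mul (le_refl j) hba.le)) hba hb heq' hea
end

section
/- Let n ≥ k ≥ 0, b > a > 0 be integers with k < b, and set C_j = C(n + j·a, k + j·b), where C(m, r) = 0 if r > m. Then the infinite matrix W with entries W_{i,j} = C_{j-i} (and C_s = 0 for s < 0) is totally positive: every minor of W is nonnegative. -/
/-!
Match row `i` of the minor with the point `A i = (a rᵢ, b rᵢ)` (time, height) and column `j`
with `B j = (n + a cⱼ, k + b cⱼ)`, and consider paths that advance one unit of time per step and rise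
by `0` or `1`. There are `C(n + (cⱼ - rᵢ) a, k + (cⱼ - rᵢ) b)` such paths from `A i` to `B j`, and
none when `rᵢ > cⱼ` because `k < b`, so the minor is a Lindström–Gessel–Viennot determinant: it is
the sum of `sign σ` over the families of paths from `A (σ v)` to `B v`. Exchanging the tails of
the two paths that meet first (earliest time, then least pair of indices) is a sign-reversing
involution on the families in which two paths meet. As `a ≤ b`, both the `A i` and the `B j` rise
at least as fast as time advances; so if `j < j'` but `σ j' < σ j`, path `j'` is weakly below
path `j` when the latter starts and weakly above it when the latter ends, and the two meet since
their heights change by at most one per step. Hence only `σ = 1` survives and the determinant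
counts the nonintersecting families.
-/

open Finset Equiv Equiv.Perm

theorem Int.exists_mem_Icc_eq_zero {f : ℤ → ℤ} (hf : ∀ t, f (t + 1) ≤ f t + 1) {a b : ℤ}
    (hab : a ≤ b) (ha : f a ≤ 0) (hb : 0 ≤ f b) : ∃ t ∈ Icc a b, f t = 0 := by
  induction b, hab using Int.leInduction with
  | base => exact ⟨a, left_mem_Icc.2 le_rfl, le_antisymm ha hb⟩
  | succ b hab ih =>
    by_cases hfb : 0 ≤ f b
    · obtain ⟨t, ht, hft⟩ := ih hfb
      exact ⟨t, Icc_subset_Icc_right (by omega) ht, hft⟩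
    · have := hf b
      exact ⟨b + 1, mem_Icc.2 ⟨by omega, le_rfl⟩, by omega⟩

theorem Finset.min'_eq_of_mem_iff {α : Type*} [LinearOrder α] {s s' : Finset α}
    (hs : s.Nonempty) (hs' : s'.Nonempty) (h : ∀ c ≤ s.min' hs, c ∈ s' ↔ c ∈ s) :
    s'.min' hs' = s.min' hs :=
  le_antisymm (min'_le _ _ ((h _ le_rfl).2 (min'_mem _ _))) <| not_lt.1 fun hlt =>
    hlt.not_ge (min'_le _ _ ((h _ hlt.le).1 (min'_mem _ _)))

namespace LatticePath

/-- A path starting at `p` is recorded by the set `S` of times at which it rises by one; it stays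
level at all other times. The paths from `p` to `q` are those with `S ⊆ [p.1, q.1)`. -/
def height (p : ℤ × ℤ) (S : Finset ℤ) (t : ℤ) : ℤ := p.2 + #{u ∈ S | u < t}

noncomputable def paths (p q : ℤ × ℤ) : Finset (Finset ℤ) :=
  {S ∈ (Ico p.1 q.1).powerset | (#S : ℤ) = q.2 - p.2}

section Paths

variable {p q p' q' : ℤ × ℤ} {S T U V : Finset ℤ} {t τ : ℤ}

lemma mem_paths : S ∈ paths p q ↔ S ⊆ Ico p.1 q.1 ∧ (#S : ℤ) = q.2 - p.2 := by
  simp [paths]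

lemma card_paths (p q : ℤ × ℤ) :
    #(paths p q) = if p.2 ≤ q.2 then (q.1 - p.1).toNat.choose (q.2 - p.2).toNat else 0 := by
  split_ifs with h
  · rw [← Int.card_Ico, ← card_powersetCard, powersetCard_eq_filter, paths]
    exact congrArg card (filter_congr fun S _ => by omega)
  · rw [card_eq_zero, paths, filter_eq_empty_iff]
    intro S _
    omega

lemma height_mono (p : ℤ × ℤ) (S : Finset ℤ) : Monotone (height p S) := fun t _ h => by
  have := card_le_card (monotone_filter_right S fun u _ (hu : u < t) => hu.trans_le h)
  simp only [height]
  omega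

lemma height_add_one_le (p : ℤ × ℤ) (S : Finset ℤ) (t : ℤ) :
    height p S (t + 1) ≤ height p S t + 1 := by
  have hsub : {u ∈ S | u < t + 1} ⊆ insert t {u ∈ S | u < t} := by
    intro u
    simp only [mem_filter, mem_insert]
    grind
  have := (card_le_card hsub).trans (card_insert_le _ _)
  simp only [height]
  omega

lemma le_height (p : ℤ × ℤ) (S : Finset ℤ) (t : ℤ) : p.2 ≤ height p S t :=
  le_add_of_nonneg_right (Nat.cast_nonneg _)

lemma height_le (hS : S ∈ paths p q) (t : ℤ) : height p S t ≤ q.2 := by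
  have := card_filter_le S (· < t)
  have := (mem_paths.1 hS).2
  simp only [height]
  omega

lemma height_le_add_sub (hS : S ∈ paths p q) (ht : p.1 ≤ t) :
    height p S t ≤ p.2 + (t - p.1) := by
  have hsub : {u ∈ S | u < t} ⊆ Ico p.1 t := fun u hu => by
    have := (mem_paths.1 hS).1 (mem_filter.1 hu).1
    simp only [mem_filter, mem_Ico] at hu this ⊢
    omega
  have := card_le_card hsub
  rw [Int.card_Ico] at this
  simp only [height]
  omega

lemma sub_sub_le_height (hS : S ∈ paths p q) (ht : t ≤ q.1) :
    q.2 - (q.1 - t) ≤ height p S t := by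
  have hsub : {u ∈ S | ¬ u < t} ⊆ Ico t q.1 := fun u hu => by
    have := (mem_paths.1 hS).1 (mem_filter.1 hu).1
    simp only [mem_filter, mem_Ico] at hu this ⊢
    omega
  have := card_le_card hsub
  rw [Int.card_Ico] at this
  have := card_filter_add_card_filter_not (s := S) (p := (· < t))
  have := (mem_paths.1 hS).2
  simp only [height]
  omega

def splice (S T : Finset ℤ) (t : ℤ) : Finset ℤ := {u ∈ S | u < t} ∪ {u ∈ T | t ≤ u}

lemma splice_self : splice S S t = S := by
  ext u
  simp only [splice, mem_union, mem_filter]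
  grind

lemma splice_splice : splice (splice S T t) (splice U V t) t = splice S V t := by
  ext u
  simp only [splice, mem_union, mem_filter]
  grind

lemma height_splice (h : τ ≤ t) : height p (splice S T t) τ = height p S τ := by
  have : {u ∈ splice S T t | u < τ} = {u ∈ S | u < τ} := by
    ext u
    simp only [splice, mem_union, mem_filter]
    grind
  rw [height, height, this]

lemma splice_mem_paths (hS : S ∈ paths p q) (hT : T ∈ paths p' q') (h₁ : p.1 ≤ t) (h₂ : t ≤ q'.1)
    (heq : height p S t = height p' T t) : splice S T t ∈ paths p q' := by
  obtain ⟨hS, hcS⟩ := mem_paths.1 hS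
  obtain ⟨hT, hcT⟩ := mem_paths.1 hT
  refine mem_paths.2 ⟨fun u hu => ?_, ?_⟩
  · simp only [splice, mem_union, mem_filter] at hu
    rcases hu with ⟨hu, hut⟩ | ⟨hu, htu⟩
    · have := hS hu
      simp only [mem_Ico] at this ⊢
      omega
    · have := hT hu
      simp only [mem_Ico] at this ⊢
      omega
  · have hdisj : Disjoint {u ∈ S | u < t} {u ∈ T | t ≤ u} :=
      disjoint_left.2 fun u h₁ h₂ => by
        simp only [mem_filter] at h₁ h₂
        omega
    have hT' := card_filter_add_card_filter_not (s := T) (p := (· < t))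
    rw [filter_congr fun u _ => not_lt] at hT'
    rw [splice, card_union_of_disjoint hdisj]
    simp only [height] at heq
    push_cast
    omega

end Paths

abbrev Family (d : ℕ) := Σ _ : Perm (Fin d), Fin d → Finset ℤ

variable {d : ℕ} (A B : Fin d → ℤ × ℤ)

noncomputable def families : Finset (Family d) :=
  univ.sigma fun σ => Fintype.piFinset fun v => paths (A (σ v)) (B v)

lemma det_eq_sum_sign :
    (Matrix.of fun i j => (#(paths (A i) (B j)) : ℤ)).det = ∑ x ∈ families A B, (sign x.1 : ℤ) := by
  rw [Matrix.det_apply', families, sum_sigma]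
  refine sum_congr rfl fun σ _ => ?_
  simp only [Matrix.of_apply, sum_const, Fintype.card_piFinset, nsmul_eq_mul, Nat.cast_prod,
    mul_comm, Int.cast_id]

def IsCrossing (x : Family d) (t : ℤ) (j j' : Fin d) : Prop :=
  j < j' ∧ t ∈ Icc (A (x.1 j)).1 (B j).1 ∧ t ∈ Icc (A (x.1 j')).1 (B j').1 ∧
    height (A (x.1 j)) (x.2 j) t = height (A (x.1 j')) (x.2 j') t

open Classical in
noncomputable def crossings (x : Family d) : Finset (ℤ ×ₗ Fin d ×ₗ Fin d) :=
  univ.biUnion fun jj : Fin d × Fin d =>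
    {t ∈ Icc (A (x.1 jj.1)).1 (B jj.1).1 | IsCrossing A B x t jj.1 jj.2}.image
      fun t => toLex (t, toLex jj)

def switch (x : Family d) (t : ℤ) (j j' : Fin d) : Family d :=
  ⟨x.1 * swap j j', fun v => splice (x.2 (swap j j' v)) (x.2 v) t⟩

noncomputable def switchFirst (x : Family d) (h : (crossings A B x).Nonempty) : Family d :=
  let c := ofLex ((crossings A B x).min' h)
  switch x c.1 (ofLex c.2).1 (ofLex c.2).2

variable {A B} {x : Family d} {t τ : ℤ} {j j' : Fin d}

lemma mem_families : x ∈ families A B ↔ ∀ v, x.2 v ∈ paths (A (x.1 v)) (B v) := by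
  simp [families]

lemma toLex_mem_crossings :
    toLex (t, toLex (j, j')) ∈ crossings A B x ↔ IsCrossing A B x t j j' := by
  simp only [crossings, mem_biUnion, mem_univ, true_and, mem_image, mem_filter]
  constructor
  · rintro ⟨⟨i, i'⟩, s, ⟨_, hs⟩, hst⟩
    simp only [toLex_inj, Prod.mk.injEq] at hst
    obtain ⟨rfl, rfl, rfl⟩ := hst
    exact hs
  · intro h
    exact ⟨(j, j'), t, ⟨h.2.1, h⟩, rfl⟩

lemma switch_switch : switch (switch x t j j') t j j' = x := by
  obtain ⟨σ, F⟩ := x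
  simp only [switch, mul_assoc, swap_mul_self, mul_one, swap_apply_self, splice_splice,
    splice_self]

lemma sign_switch (h : j ≠ j') : sign (switch x t j j').1 = -sign x.1 := by
  simp only [switch, Perm.sign_mul, sign_swap h, mul_neg_one]

lemma height_switch (hτ : τ ≤ t) (v : Fin d) :
    height (A ((switch x t j j').1 v)) ((switch x t j j').2 v) τ =
      height (A (x.1 (swap j j' v))) (x.2 (swap j j' v)) τ :=
  height_splice hτ

section Switch

variable (hc : IsCrossing A B x t j j')
include hc

lemma switch_mem_families (hx : x ∈ families A B) : switch x t j j' ∈ families A B := by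
  obtain ⟨-, hj, hj', heq⟩ := hc
  obtain ⟨hj₁, hj₂⟩ := mem_Icc.1 hj
  obtain ⟨hj'₁, hj'₂⟩ := mem_Icc.1 hj'
  have hx := mem_families.1 hx
  refine mem_families.2 fun v => ?_
  show splice (x.2 (swap j j' v)) (x.2 v) t ∈ paths (A (x.1 (swap j j' v))) (B v)
  rcases eq_or_ne v j with rfl | hvj
  · rw [swap_apply_left]
    exact splice_mem_paths (hx j') (hx v) hj'₁ hj₂ heq.symm
  rcases eq_or_ne v j' with rfl | hvj'
  · rw [swap_apply_right]
    exact splice_mem_paths (hx j) (hx v) hj₁ hj'₂ heq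
  · rw [swap_apply_of_ne_of_ne hvj hvj', splice_self]
    exact hx v

lemma mem_Icc_switch_iff (w : Fin d) :
    t ∈ Icc (A ((switch x t j j').1 w)).1 (B w).1 ↔ t ∈ Icc (A (x.1 w)).1 (B w).1 := by
  obtain ⟨-, hj, hj', -⟩ := hc
  rw [mem_Icc] at hj hj'
  simp only [mem_Icc]
  show (A (x.1 (swap j j' w))).1 ≤ t ∧ t ≤ (B w).1 ↔ _
  rcases eq_or_ne w j with rfl | hwj
  · rw [swap_apply_left]
    omega
  rcases eq_or_ne w j' with rfl | hwj'
  · rw [swap_apply_right]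
    omega
  · rw [swap_apply_of_ne_of_ne hwj hwj']

lemma height_switch_self (w : Fin d) :
    height (A ((switch x t j j').1 w)) ((switch x t j j').2 w) t = height (A (x.1 w)) (x.2 w) t := by
  rw [height_switch le_rfl]
  rcases eq_or_ne w j with rfl | hwj
  · rw [swap_apply_left, hc.2.2.2]
  rcases eq_or_ne w j' with rfl | hwj'
  · rw [swap_apply_right, hc.2.2.2]
  · rw [swap_apply_of_ne_of_ne hwj hwj']

lemma isCrossing_switch_iff {u v : Fin d} :
    IsCrossing A B (switch x t j j') t u v ↔ IsCrossing A B x t u v := by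
  simp only [IsCrossing, mem_Icc_switch_iff hc, height_switch_self hc]

lemma exists_isCrossing_of_switch (hτ : τ ≤ t) {u v : Fin d}
    (h : IsCrossing A B (switch x t j j') τ u v) : ∃ p q, IsCrossing A B x τ p q := by
  obtain ⟨huv, hu, hv, heq⟩ := h
  have hB : ∀ w, τ ≤ (B w).1 → τ ≤ (B (swap j j' w)).1 := by
    intro w hw
    have := (mem_Icc.1 hc.2.1).2
    have := (mem_Icc.1 hc.2.2.1).2
    rcases eq_or_ne w j with rfl | hwj
    · rw [swap_apply_left]
      omega
    rcases eq_or_ne w j' with rfl | hwj'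
    · rw [swap_apply_right]
      omega
    · rwa [swap_apply_of_ne_of_ne hwj hwj']
  rw [height_switch hτ, height_switch hτ] at heq
  have hu' : τ ∈ Icc (A (x.1 (swap j j' u))).1 (B (swap j j' u)).1 :=
    mem_Icc.2 ⟨(mem_Icc.1 hu).1, hB u (mem_Icc.1 hu).2⟩
  have hv' : τ ∈ Icc (A (x.1 (swap j j' v))).1 (B (swap j j' v)).1 :=
    mem_Icc.2 ⟨(mem_Icc.1 hv).1, hB v (mem_Icc.1 hv).2⟩
  rcases lt_or_gt_of_ne ((swap j j').injective.ne huv.ne) with hlt | hgt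
  · exact ⟨_, _, hlt, hu', hv', heq⟩
  · exact ⟨_, _, hgt, hv', hu', heq.symm⟩

end Switch

section First

variable {h : (crossings A B x).Nonempty}
  (hmin : (crossings A B x).min' h = toLex (t, toLex (j, j')))
include hmin

lemma isCrossing_of_min'_eq : IsCrossing A B x t j j' :=
  toLex_mem_crossings.1 (hmin ▸ min'_mem _ h)

lemma le_of_isCrossing {u v : Fin d} (hc : IsCrossing A B x τ u v) : t ≤ τ :=
  Prod.Lex.monotone_fst (toLex (t, toLex (j, j'))) (toLex (τ, toLex (u, v)))
    (hmin ▸ min'_le _ _ (toLex_mem_crossings.2 hc))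

lemma switchFirst_eq : switchFirst A B x h = switch x t j j' := by
  rw [switchFirst, hmin]
  rfl

/-- Up to time `t` the switched family is `x` with paths `j` and `j'` relabelled, so it has the
same crossings up to time `t`. -/
lemma min'_crossings_switch (hx' : (crossings A B (switch x t j j')).Nonempty) :
    (crossings A B (switch x t j j')).min' hx' = toLex (t, toLex (j, j')) := by
  have hc := isCrossing_of_min'_eq hmin
  rw [← hmin]
  refine min'_eq_of_mem_iff h hx' fun c hle => ?_
  obtain ⟨τ, u, v, rfl⟩ : ∃ τ u v, c = toLex (τ, toLex (u, v)) := ⟨_, _, _, rfl⟩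
  have hτ : τ ≤ t := Prod.Lex.monotone_fst _ _ (hmin ▸ hle)
  rw [toLex_mem_crossings, toLex_mem_crossings]
  suffices IsCrossing A B (switch x t j j') τ u v ∨ IsCrossing A B x τ u v → τ = t by
    constructor <;> intro h
    · obtain rfl := this (.inl h)
      exact (isCrossing_switch_iff hc).1 h
    · obtain rfl := this (.inr h)
      exact (isCrossing_switch_iff hc).2 h
  rintro (h | h)
  · obtain ⟨p, q, h⟩ := exists_isCrossing_of_switch hc hτ h
    exact le_antisymm hτ (le_of_isCrossing hmin h)
  · exact le_antisymm hτ (le_of_isCrossing hmin h)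

end First

lemma exists_min'_crossings_eq (h : (crossings A B x).Nonempty) :
    ∃ t j j', (crossings A B x).min' h = toLex (t, toLex (j, j')) ∧ IsCrossing A B x t j j' :=
  ⟨_, _, _, rfl, isCrossing_of_min'_eq (h := h) rfl⟩

lemma sign_switchFirst (h : (crossings A B x).Nonempty) :
    sign (switchFirst A B x h).1 = -sign x.1 := by
  obtain ⟨t, j, j', hmin, hc⟩ := exists_min'_crossings_eq h
  rw [switchFirst_eq hmin, sign_switch hc.1.ne]

lemma switchFirst_mem (hx : x ∈ families A B) (h : (crossings A B x).Nonempty) :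
    switchFirst A B x h ∈ families A B ∧ (crossings A B (switchFirst A B x h)).Nonempty := by
  obtain ⟨t, j, j', hmin, hc⟩ := exists_min'_crossings_eq h
  rw [switchFirst_eq hmin]
  exact ⟨switch_mem_families hc hx, _, toLex_mem_crossings.2 ((isCrossing_switch_iff hc).2 hc)⟩

lemma switchFirst_switchFirst (h : (crossings A B x).Nonempty)
    (h' : (crossings A B (switchFirst A B x h)).Nonempty) :
    switchFirst A B (switchFirst A B x h) h' = x := by
  obtain ⟨t, j, j', hmin, -⟩ := exists_min'_crossings_eq h
  have hy := switchFirst_eq hmin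
  generalize switchFirst A B x h = y at hy h' ⊢
  subst hy
  rw [switchFirst_eq (min'_crossings_switch hmin h'), switch_switch]

section Nonneg

variable (hA : ∀ i i', i < i' → (A i).1 ≤ (A i').1 ∧ (A i').1 - (A i).1 ≤ (A i').2 - (A i).2)
  (hB : ∀ j j', j < j' → (B j).1 ≤ (B j').1 ∧ (B j').1 - (B j).1 ≤ (B j').2 - (B j).2)
  (hAB : ∀ i j, (A i).2 ≤ (B j).2 → (A i).1 ≤ (B j).1)
include hA hB hAB

lemma exists_isCrossing (hx : x ∈ families A B) (hjj : j < j') (hσ : x.1 j' < x.1 j) :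
    ∃ t, IsCrossing A B x t j j' := by
  have hF := mem_families.1 hx j
  have hF' := mem_families.1 hx j'
  obtain ⟨hA₁, hA₂⟩ := hA _ _ hσ
  obtain ⟨hB₁, hB₂⟩ := hB _ _ hjj
  have hAB₁ := hAB (x.1 j) j (by have := (mem_paths.1 hF).2; omega)
  let f t := height (A (x.1 j')) (x.2 j') t - height (A (x.1 j)) (x.2 j) t
  have hstart : f (A (x.1 j)).1 ≤ 0 := by
    have := height_le_add_sub hF' hA₁
    have := le_height (A (x.1 j)) (x.2 j) (A (x.1 j)).1
    simp only [f]
    omega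
  have hend : 0 ≤ f (B j).1 := by
    have := sub_sub_le_height hF' hB₁
    have := height_le hF (B j).1
    simp only [f]
    omega
  have hstep (t : ℤ) : f (t + 1) ≤ f t + 1 := by
    have := height_add_one_le (A (x.1 j')) (x.2 j') t
    have := height_mono (A (x.1 j)) (x.2 j) (Int.le_add_one le_rfl : t ≤ t + 1)
    simp only [f]
    omega
  obtain ⟨t, ht, hft⟩ := Int.exists_mem_Icc_eq_zero hstep hAB₁ hstart hend
  obtain ⟨ht₁, ht₂⟩ := mem_Icc.1 ht
  exact ⟨t, hjj, ht, mem_Icc.2 ⟨by omega, by omega⟩, by simp only [f] at hft; omega⟩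

lemma crossings_nonempty (hx : x ∈ families A B) (hσ : x.1 ≠ 1) : (crossings A B x).Nonempty := by
  obtain ⟨j, j', hjj, hinv⟩ : ∃ j j', j < j' ∧ x.1 j' < x.1 j := by
    by_contra! h
    exact hσ (Equiv.ext fun v => congrFun (StrictMono.eq_id fun j j' hjj =>
      (h j j' hjj).lt_of_ne (x.1.injective.ne hjj.ne)) v)
  obtain ⟨t, ht⟩ := exists_isCrossing hA hB hAB hx hjj hinv
  exact ⟨_, toLex_mem_crossings.2 ht⟩

theorem det_card_paths_nonneg : 0 ≤ (Matrix.of fun i j => (#(paths (A i) (B j)) : ℤ)).det := by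
  classical
  rw [det_eq_sum_sign, ← sum_filter_add_sum_filter_not _ fun x => (crossings A B x).Nonempty]
  have hcancel : ∑ x ∈ families A B with (crossings A B x).Nonempty, (sign x.1 : ℤ) = 0 := by
    refine sum_involution (fun x hx => switchFirst A B x (mem_filter.1 hx).2) (fun x hx => ?_)
      (fun x hx _ hfix => ?_) (fun x hx => ?_) (fun x hx => switchFirst_switchFirst _ _)
    · rw [sign_switchFirst, Units.val_neg, add_neg_cancel]
    · exact units_ne_neg_self _ (hfix ▸ sign_switchFirst (mem_filter.1 hx).2)
    · exact mem_filter.2 (switchFirst_mem (mem_filter.1 hx).1 (mem_filter.1 hx).2)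
  rw [hcancel, zero_add]
  refine sum_nonneg fun x hx => ?_
  obtain ⟨hx, hnc⟩ := mem_filter.1 hx
  rw [of_not_not (mt (crossings_nonempty hA hB hAB hx) hnc), Perm.sign_one, Units.val_one]
  exact zero_le_one

end Nonneg

end LatticePath

lemma mul_le_mul_and_sub_le_sub {a b : ℕ} (hab : a ≤ b) {x y : ℕ} (h : x ≤ y) :
    (x : ℤ) * a ≤ y * a ∧ (y : ℤ) * a - x * a ≤ y * b - x * b := by
  constructor <;> nlinarith

lemma le_of_mul_le_add_mul {k b : ℕ} (hkb : k < b) {r c : ℤ} (h : r * b ≤ k + c * b) : r ≤ c := by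
  by_contra! hcr
  nlinarith [mul_le_mul_of_nonneg_right (show c + 1 ≤ r by omega) (Int.natCast_nonneg b)]

lemma card_paths_toeplitz {n k a b : ℕ} (hkb : k < b) (r c : ℕ) :
    (#(LatticePath.paths ((r : ℤ) * a, (r : ℤ) * b) (n + (c : ℤ) * a, k + (c : ℤ) * b)) : ℤ) =
      if (r : ℤ) ≤ c then ((n + ((c : ℤ) - r).toNat * a).choose (k + ((c : ℤ) - r).toNat * b) : ℤ)
      else 0 := by
  rw [LatticePath.card_paths]
  split_ifs with h₁ h₂ h₂
  · obtain ⟨m, hm⟩ : ∃ m : ℕ, (c : ℤ) = r + m := ⟨(c - r : ℤ).toNat, by omega⟩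
    have e₁ : (n + (c : ℤ) * a - r * a) = ((n + m * a : ℕ) : ℤ) := by rw [hm]; push_cast; ring
    have e₂ : (k + (c : ℤ) * b - r * b) = ((k + m * b : ℕ) : ℤ) := by rw [hm]; push_cast; ring
    have e₃ : ((c : ℤ) - r).toNat = m := by omega
    simp only [e₁, e₂, e₃, Int.toNat_natCast]
  · exact absurd (le_of_mul_le_add_mul hkb h₁) h₂
  · exact absurd (by nlinarith) h₁
  · rfl

theorem toeplitz_totally_positive_general (n k a b : ℕ) (hab : a < b) (hkb : k < b) :
    ∀ (d : ℕ) (r c : Fin d → ℕ), StrictMono r → StrictMono c →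
      0 ≤ Matrix.det (fun i j : Fin d =>
        (if (r i : ℤ) ≤ (c j : ℤ) then
          ((n + ((c j : ℤ) - r i).toNat * a).choose (k + ((c j : ℤ) - r i).toNat * b) : ℤ)
        else 0)) := by
  intro d r c hr hc
  have key := LatticePath.det_card_paths_nonneg (A := fun i => ((r i : ℤ) * a, (r i : ℤ) * b))
    (B := fun j => (n + (c j : ℤ) * a, k + (c j : ℤ) * b))
    (fun i i' h => mul_le_mul_and_sub_le_sub hab.le (hr h).le)
    (fun j j' h => by
      obtain ⟨h₁, h₂⟩ := mul_le_mul_and_sub_le_sub hab.le (hc h).le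
      constructor <;> dsimp only <;> linarith)
    (fun i j h => by
      have := le_of_mul_le_add_mul hkb h
      dsimp only
      nlinarith)
  simp only [card_paths_toeplitz hkb] at key
  exact key

/-- The Toeplitz matrix of the sequence `C_j = (n+ja).choose (k+jb)` (with `C_s = 0` for
`s < 0`) is totally positive: every minor (rows `r`, columns `c`, chosen increasingly)
has nonnegative determinant. -/
theorem toeplitz_totally_positive (n k a b : ℕ) (hkn : k ≤ n) (hab : a < b) (ha : 0 < a)
    (hkb : k < b) :
    ∀ (d : ℕ) (r c : Fin d → ℕ), StrictMono r → StrictMono c →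
      0 ≤ Matrix.det (fun i j : Fin d =>
        (if (r i : ℤ) ≤ (c j : ℤ) then
          ((n + ((c j : ℤ) - r i).toNat * a).choose (k + ((c j : ℤ) - r i).toNat * b) : ℤ)
        else 0)) :=
  toeplitz_totally_positive_general n k a b hab hkb
end

section
/- Let n ≥ k ≥ 0, b > a > 0 be integers with k < b, and set C_j = C(n + j·a, k + j·b). Then the finite sequence C_0, C_1, … is log-concave: C_{j+1}² ≥ C_j·C_{j+2} for all j ≥ 0. -/
/-- Step in direction (1,1): the ratio C(M+1,R+1)/C(M,R) dominates the one shifted by (A,B). -/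
lemma choose_step_diag (M R A B : ℕ) (hRM : R ≤ M) (hAB : A ≤ B) :
    (M + A + 1).choose (R + B + 1) * M.choose R ≤
      (M + 1).choose (R + 1) * (M + A).choose (R + B) := by
  have h1 : (M + 1).choose (R + 1) * (R + 1) = (M + 1) * M.choose R := by
    simpa using (Nat.add_one_mul_choose_eq M R).symm
  have h2 : (M + A + 1).choose (R + B + 1) * (R + B + 1)
      = (M + A + 1) * (M + A).choose (R + B) := by
    simpa using (Nat.add_one_mul_choose_eq (M + A) (R + B)).symm
  have key : (M + A + 1).choose (R + B + 1) * M.choose R * ((R + 1) * (R + B + 1)) ≤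
      (M + 1).choose (R + 1) * (M + A).choose (R + B) * ((R + 1) * (R + B + 1)) := by
    have e1 : (M + A + 1).choose (R + B + 1) * M.choose R * ((R + 1) * (R + B + 1))
        = ((M + A + 1) * (R + 1)) * ((M + A).choose (R + B) * M.choose R) := by
      calc (M + A + 1).choose (R + B + 1) * M.choose R * ((R + 1) * (R + B + 1))
          = ((M + A + 1).choose (R + B + 1) * (R + B + 1)) * (M.choose R * (R + 1)) := by ring
        _ = ((M + A + 1) * (M + A).choose (R + B)) * (M.choose R * (R + 1)) := by rw [h2]
        _ = ((M + A + 1) * (R + 1)) * ((M + A).choose (R + B) * M.choose R) := by ring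
    have e2 : (M + 1).choose (R + 1) * (M + A).choose (R + B) * ((R + 1) * (R + B + 1))
        = ((M + 1) * (R + B + 1)) * ((M + A).choose (R + B) * M.choose R) := by
      calc (M + 1).choose (R + 1) * (M + A).choose (R + B) * ((R + 1) * (R + B + 1))
          = ((M + 1).choose (R + 1) * (R + 1)) * ((M + A).choose (R + B) * (R + B + 1)) := by
            ring
        _ = ((M + 1) * M.choose R) * ((M + A).choose (R + B) * (R + B + 1)) := by rw [h1]
        _ = ((M + 1) * (R + B + 1)) * ((M + A).choose (R + B) * M.choose R) := by ring
    rw [e1, e2]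
    have hmul : (M + A + 1) * (R + 1) ≤ (M + 1) * (R + B + 1) := by nlinarith
    exact Nat.mul_le_mul_right _ hmul
  exact Nat.le_of_mul_le_mul_right key (by positivity)

/-- Step in direction (0,1): the ratio C(M,R+1)/C(M,R) dominates the one shifted by (A,B). -/
lemma choose_step_vert (M R A B : ℕ) (hRM : R ≤ M) (hAB : A ≤ B) :
    (M + A).choose (R + B + 1) * M.choose R ≤
      M.choose (R + 1) * (M + A).choose (R + B) := by
  have h1 : M.choose (R + 1) * (R + 1) = M.choose R * (M - R) :=
    Nat.choose_succ_right_eq M R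
  have h2 : (M + A).choose (R + B + 1) * (R + B + 1)
      = (M + A).choose (R + B) * (M + A - (R + B)) :=
    Nat.choose_succ_right_eq (M + A) (R + B)
  have key : (M + A).choose (R + B + 1) * M.choose R * ((R + 1) * (R + B + 1)) ≤
      M.choose (R + 1) * (M + A).choose (R + B) * ((R + 1) * (R + B + 1)) := by
    have e1 : (M + A).choose (R + B + 1) * M.choose R * ((R + 1) * (R + B + 1))
        = ((M + A - (R + B)) * (R + 1)) * ((M + A).choose (R + B) * M.choose R) := by
      calc (M + A).choose (R + B + 1) * M.choose R * ((R + 1) * (R + B + 1))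
          = ((M + A).choose (R + B + 1) * (R + B + 1)) * (M.choose R * (R + 1)) := by ring
        _ = ((M + A).choose (R + B) * (M + A - (R + B))) * (M.choose R * (R + 1)) := by rw [h2]
        _ = ((M + A - (R + B)) * (R + 1)) * ((M + A).choose (R + B) * M.choose R) := by ring
    have e2 : M.choose (R + 1) * (M + A).choose (R + B) * ((R + 1) * (R + B + 1))
        = ((M - R) * (R + B + 1)) * ((M + A).choose (R + B) * M.choose R) := by
      calc M.choose (R + 1) * (M + A).choose (R + B) * ((R + 1) * (R + B + 1))
          = (M.choose (R + 1) * (R + 1)) * ((M + A).choose (R + B) * (R + B + 1)) := by ring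
        _ = (M.choose R * (M - R)) * ((M + A).choose (R + B) * (R + B + 1)) := by rw [h1]
        _ = ((M - R) * (R + B + 1)) * ((M + A).choose (R + B) * M.choose R) := by ring
    rw [e1, e2]
    have hmul : (M + A - (R + B)) * (R + 1) ≤ (M - R) * (R + B + 1) :=
      Nat.mul_le_mul (by omega) (by omega)
    exact Nat.mul_le_mul_right _ hmul
  exact Nat.le_of_mul_le_mul_right key (by positivity)

lemma choose_ray_step (m r a b : ℕ) (hab : a ≤ b) (h : r + 2 * b ≤ m + 2 * a) :
    m.choose r * (m + 2 * a).choose (r + 2 * b) ≤ ((m + a).choose (r + b)) ^ 2 := by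
  have hrm : r ≤ m := by omega
  have hrb : r + b ≤ m + a := by omega
  have Tpos : 0 < (m + a).choose (r + b) := Nat.choose_pos hrb
  -- diagonal part of the path
  have Sdiag : ∀ u : ℕ,
      (m + u + a).choose (r + u + b) * m.choose r ≤
        (m + u).choose (r + u) * (m + a).choose (r + b) := by
    intro u
    induction u with
    | zero => simp [Nat.mul_comm]
    | succ u ih =>
      have Pu : 0 < (m + u).choose (r + u) := Nat.choose_pos (by omega)
      have Qu : 0 < (m + u + a).choose (r + u + b) := Nat.choose_pos (by omega)
      have s1 := choose_step_diag (m + u) (r + u) a b (by omega) hab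
      have comb := Nat.mul_le_mul s1 ih
      have key : (m + (u + 1) + a).choose (r + (u + 1) + b) * m.choose r *
            ((m + u).choose (r + u) * (m + u + a).choose (r + u + b)) ≤
          (m + (u + 1)).choose (r + (u + 1)) * (m + a).choose (r + b) *
            ((m + u).choose (r + u) * (m + u + a).choose (r + u + b)) := by
        have e1 : m + (u + 1) + a = m + u + a + 1 := by omega
        have e2 : r + (u + 1) + b = r + u + b + 1 := by omega
        have e3 : m + (u + 1) = m + u + 1 := by omega
        have e4 : r + (u + 1) = r + u + 1 := by omega
        rw [e1, e2, e3, e4]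
        calc (m + u + a + 1).choose (r + u + b + 1) * m.choose r *
              ((m + u).choose (r + u) * (m + u + a).choose (r + u + b))
            = ((m + u + a + 1).choose (r + u + b + 1) * (m + u).choose (r + u)) *
              ((m + u + a).choose (r + u + b) * m.choose r) := by ring
          _ ≤ ((m + u + 1).choose (r + u + 1) * (m + u + a).choose (r + u + b)) *
              ((m + u).choose (r + u) * (m + a).choose (r + b)) := comb
          _ = (m + u + 1).choose (r + u + 1) * (m + a).choose (r + b) *
              ((m + u).choose (r + u) * (m + u + a).choose (r + u + b)) := by ring
      exact Nat.le_of_mul_le_mul_right key (by positivity)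
  -- vertical part of the path
  have Svert : ∀ v : ℕ, r + a + b + v ≤ m + 2 * a →
      (m + 2 * a).choose (r + a + b + v) * m.choose r ≤
        (m + a).choose (r + a + v) * (m + a).choose (r + b) := by
    intro v
    induction v with
    | zero =>
      intro _
      have := Sdiag a
      rw [show m + a + a = m + 2 * a from by omega] at this
      simpa using this
    | succ v ih =>
      intro hv
      have hv' : r + a + b + v ≤ m + 2 * a := by omega
      have ih' := ih hv'
      have Pv : 0 < (m + a).choose (r + a + v) := Nat.choose_pos (by omega)
      have Qv : 0 < (m + 2 * a).choose (r + a + b + v) := Nat.choose_pos hv'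
      have s2 := choose_step_vert (m + a) (r + a + v) a b (by omega) hab
      rw [show m + a + a = m + 2 * a from by omega,
        show r + a + v + b + 1 = r + a + b + (v + 1) from by omega,
        show r + a + v + b = r + a + b + v from by omega,
        show r + a + v + 1 = r + a + (v + 1) from by omega] at s2
      -- s2 : C(m+2a, r+a+b+(v+1)) * C(m+a, r+a+v) ≤ C(m+a, r+a+(v+1)) * C(m+2a, r+a+b+v)
      have comb := Nat.mul_le_mul s2 ih'
      have key : (m + 2 * a).choose (r + a + b + (v + 1)) * m.choose r *
            ((m + a).choose (r + a + v) * (m + 2 * a).choose (r + a + b + v)) ≤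
          (m + a).choose (r + a + (v + 1)) * (m + a).choose (r + b) *
            ((m + a).choose (r + a + v) * (m + 2 * a).choose (r + a + b + v)) := by
        calc (m + 2 * a).choose (r + a + b + (v + 1)) * m.choose r *
              ((m + a).choose (r + a + v) * (m + 2 * a).choose (r + a + b + v))
            = ((m + 2 * a).choose (r + a + b + (v + 1)) * (m + a).choose (r + a + v)) *
              ((m + 2 * a).choose (r + a + b + v) * m.choose r) := by ring
          _ ≤ ((m + a).choose (r + a + (v + 1)) * (m + 2 * a).choose (r + a + b + v)) *
              ((m + a).choose (r + a + v) * (m + a).choose (r + b)) := comb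
          _ = (m + a).choose (r + a + (v + 1)) * (m + a).choose (r + b) *
              ((m + a).choose (r + a + v) * (m + 2 * a).choose (r + a + b + v)) := by ring
      exact Nat.le_of_mul_le_mul_right key (by positivity)
  have final := Svert (b - a) (by omega)
  rw [show r + a + b + (b - a) = r + 2 * b from by omega,
    show r + a + (b - a) = r + b from by omega] at final
  calc m.choose r * (m + 2 * a).choose (r + 2 * b)
      = (m + 2 * a).choose (r + 2 * b) * m.choose r := by ring
    _ ≤ (m + a).choose (r + b) * (m + a).choose (r + b) := final
    _ = ((m + a).choose (r + b)) ^ 2 := by ring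

theorem choose_ray_logConcave (n k a b : ℕ) (hkn : k ≤ n) (hab : a < b) (ha : 0 < a)
    (hkb : k < b) :
    ∀ j : ℕ,
      (n + j * a).choose (k + j * b) * (n + (j + 2) * a).choose (k + (j + 2) * b) ≤
        ((n + (j + 1) * a).choose (k + (j + 1) * b)) ^ 2 := by
  intro j
  have ea2 : (j + 2) * a = j * a + 2 * a := by ring
  have eb2 : (j + 2) * b = j * b + 2 * b := by ring
  have ea1 : (j + 1) * a = j * a + a := by ring
  have eb1 : (j + 1) * b = j * b + b := by ring
  by_cases h : k + (j + 2) * b ≤ n + (j + 2) * a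
  · have := choose_ray_step (n + j * a) (k + j * b) a b (le_of_lt hab) (by omega)
    rw [show n + j * a + 2 * a = n + (j + 2) * a from by omega,
      show k + j * b + 2 * b = k + (j + 2) * b from by omega,
      show n + j * a + a = n + (j + 1) * a from by omega,
      show k + j * b + b = k + (j + 1) * b from by omega] at this
    exact this
  · have hz : (n + (j + 2) * a).choose (k + (j + 2) * b) = 0 :=
      Nat.choose_eq_zero_of_lt (by omega)
    rw [hz, Nat.mul_zero]
    exact Nat.zero_le _
end

section
/- Let g : ℝ≥0 → ℝ be twice differentiable and suppose g'' changes sign at most once on (0,∞), being eventually positive (i.e., there is x₀ such that g''(x) > 0 for x > x₀, and whenever g''(x) > 0 and y > x then g''(y) ≥ 0). Then there exists m ≥ 0 such that the sequence c_j = exp(g(j)) is log-concave for 0 ≤ j ≤ m and log-convex for j ≥ m. -/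
open Real

/-- If `g` is twice differentiable and `g''` changes sign at most once on `(0,∞)` (being
eventually positive), then `c_j = exp (g j)` is log-concave up to some `m` and log-convex
from `m` on. -/
theorem exp_logConcave_then_logConvex (g : ℝ → ℝ)
    (hdiff : ∀ x : ℝ, DifferentiableAt ℝ g x ∧ DifferentiableAt ℝ (deriv g) x)
    (hevent : ∃ x₀ : ℝ, ∀ x : ℝ, x₀ < x → 0 < deriv (deriv g) x)
    (hsign : ∀ x y : ℝ, 0 < x → x < y → 0 < deriv (deriv g) x → 0 ≤ deriv (deriv g) y) :
    ∃ m : ℕ,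
      (∀ j : ℕ, j + 2 ≤ m →
        exp (g j) * exp (g (j + 2)) ≤ exp (g (j + 1)) ^ 2) ∧
      (∀ j : ℕ, m ≤ j →
        exp (g (j + 1)) ^ 2 ≤ exp (g j) * exp (g (j + 2))) := by
  classical
  obtain ⟨x₀, hx₀⟩ := hevent
  set g'' := deriv (deriv g) with hg''
  -- the positivity set of g''
  set S : Set ℝ := {x : ℝ | 0 < x ∧ 0 < g'' x} with hS
  have hSne : S.Nonempty := by
    refine ⟨max x₀ 0 + 1, ?_, ?_⟩
    · positivity
    · exact hx₀ _ (by linarith [le_max_left x₀ 0])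
  have hSbdd : BddBelow S := ⟨0, fun x hx => hx.1.le⟩
  set a : ℝ := max (sInf S) 0 with ha
  have ha0 : 0 ≤ a := le_max_right _ _
  -- g'' nonneg to the right of a
  have hpos : ∀ y : ℝ, a < y → 0 ≤ g'' y := by
    intro y hy
    have : sInf S < y := lt_of_le_of_lt (le_max_left _ _) hy
    obtain ⟨x, hxS, hxy⟩ := (csInf_lt_iff hSbdd hSne).1 this
    exact hsign x y hxS.1 hxy hxS.2
  -- g'' nonpos to the left of a
  have hneg : ∀ y : ℝ, 0 < y → y < a → g'' y ≤ 0 := by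
    intro y hy0 hya
    by_contra h
    push_neg at h
    have hyS : y ∈ S := ⟨hy0, h⟩
    have : sInf S ≤ y := csInf_le hSbdd hyS
    have : a ≤ y := max_le this hy0.le
    linarith
  have hcontg' : Continuous (deriv g) :=
    Differentiable.continuous (fun x => (hdiff x).2 : Differentiable ℝ (deriv g))
  -- g' is antitone on [0, a]
  have hanti : AntitoneOn (deriv g) (Set.Icc 0 a) := by
    apply antitoneOn_of_deriv_nonpos (convex_Icc 0 a) hcontg'.continuousOn
    · intro x hx
      exact ((hdiff x).2).differentiableWithinAt
    · intro x hx
      rw [interior_Icc] at hx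
      exact hneg x hx.1 hx.2
  -- g' is monotone on [a, ∞)
  have hmono : MonotoneOn (deriv g) (Set.Ici a) := by
    apply monotoneOn_of_deriv_nonneg (convex_Ici a) hcontg'.continuousOn
    · intro x hx
      exact ((hdiff x).2).differentiableWithinAt
    · intro x hx
      rw [interior_Ici] at hx
      exact hpos x hx
  -- the increment of g'
  set φ : ℝ → ℝ := fun t => deriv g (t + 1) - deriv g t with hφ
  -- once φ is positive, it stays nonnegative
  have hφkey : ∀ s t : ℝ, 0 ≤ s → s < t → 0 < φ s → 0 ≤ φ t := by
    intro s t hs hst hφs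
    have hs1 : a < s + 1 := by
      by_contra h
      push_neg at h
      have : deriv g (s + 1) ≤ deriv g s :=
        hanti ⟨hs, by linarith⟩ ⟨by linarith, h⟩ (by linarith)
      simp only [hφ] at hφs; linarith
    rcases le_or_gt a t with h | h
    · have h1 : deriv g t ≤ deriv g (t + 1) :=
        hmono (Set.mem_Ici.2 h) (Set.mem_Ici.2 (by linarith)) (by linarith)
      simp only [hφ]; linarith
    · have h1 : deriv g t ≤ deriv g s :=
        hanti ⟨hs, by linarith⟩ ⟨by linarith, h.le⟩ hst.le
      have h2 : deriv g (s + 1) ≤ deriv g (t + 1) :=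
        hmono (Set.mem_Ici.2 hs1.le) (Set.mem_Ici.2 (by linarith)) (by linarith)
      simp only [hφ] at hφs ⊢; linarith
  -- MVT: φ x = g'' η for some η ∈ (x, x+1)
  have hmvt1 : ∀ x : ℝ, ∃ η ∈ Set.Ioo x (x + 1), φ x = g'' η := by
    intro x
    obtain ⟨c, hc, hceq⟩ :=
      exists_hasDerivAt_eq_slope (deriv g) g'' (by linarith : x < x + 1)
        hcontg'.continuousOn (fun y _ => ((hdiff y).2).hasDerivAt)
    refine ⟨c, hc, ?_⟩
    rw [hceq]
    simp [hφ]
  -- the second difference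
  set D : ℕ → ℝ := fun j => (g (j + 2) - g (j + 1)) - (g (j + 1) - g j) with hD
  have hcontg : Continuous g :=
    Differentiable.continuous (fun x => (hdiff x).1 : Differentiable ℝ g)
  -- MVT: D j = φ ξ for some ξ ∈ (j, j+1)
  have hmvt2 : ∀ j : ℕ, ∃ ξ ∈ Set.Ioo (j : ℝ) (j + 1), D j = φ ξ := by
    intro j
    have hder : ∀ y ∈ Set.Ioo (j : ℝ) (j + 1),
        HasDerivAt (fun t => g (t + 1) - g t) (φ y) y := by
      intro y _
      have h1 : HasDerivAt (fun t : ℝ => g (t + 1)) (deriv g (y + 1)) y :=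
        HasDerivAt.comp_add_const y 1 ((hdiff (y + 1)).1.hasDerivAt)
      exact h1.sub ((hdiff y).1.hasDerivAt)
    obtain ⟨c, hc, hceq⟩ :=
      exists_hasDerivAt_eq_slope (fun t => g (t + 1) - g t) φ
        (by linarith : (j : ℝ) < j + 1)
        ((hcontg.comp (continuous_id.add continuous_const)).sub hcontg).continuousOn hder
    refine ⟨c, hc, ?_⟩
    rw [hceq]
    have : (j : ℝ) + 1 + 1 = (j : ℝ) + 2 := by ring
    rw [this]
    ring
  -- key: D j > 0 implies D j' ≥ 0 for j' > j
  have hDkey : ∀ j j' : ℕ, j < j' → 0 < D j → 0 ≤ D j' := by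
    intro j j' hjj' hDj
    obtain ⟨ξ, hξ, hξeq⟩ := hmvt2 j
    obtain ⟨ξ', hξ', hξ'eq⟩ := hmvt2 j'
    rw [hξeq] at hDj
    rw [hξ'eq]
    have hcast : (j : ℝ) + 1 ≤ (j' : ℝ) := by exact_mod_cast hjj'
    apply hφkey ξ ξ' (le_trans (Nat.cast_nonneg j) hξ.1.le)
      (by linarith [hξ.2, hξ'.1]) hDj
  -- there is some n with D n > 0
  have hex : ∃ n : ℕ, 0 < D n := by
    obtain ⟨n, hn⟩ := exists_nat_gt x₀
    refine ⟨n, ?_⟩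
    obtain ⟨ξ, hξ, hξeq⟩ := hmvt2 n
    obtain ⟨η, hη, hηeq⟩ := hmvt1 ξ
    rw [hξeq, hηeq]
    exact hx₀ η (by linarith [hξ.1, hη.1])
  -- take m to be the least such n
  refine ⟨Nat.find hex, ?_, ?_⟩
  · intro j hj
    have hjm : ¬ 0 < D j := Nat.find_min hex (by omega)
    push_neg at hjm
    rw [← exp_add, sq, ← exp_add, exp_le_exp]
    simp only [hD] at hjm
    linarith
  · intro j hj
    have hDm : 0 < D (Nat.find hex) := Nat.find_spec hex
    have hDj : 0 ≤ D j := by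
      rcases eq_or_lt_of_le hj with h | h
      · rw [← h]; exact hDm.le
      · exact hDkey _ _ h hDm
    rw [← exp_add, sq, ← exp_add, exp_le_exp]
    simp only [hD] at hDj
    linarith
end
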